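/- arXiv:2002.00767 — 9 statements merged into one kernel-verified Lean document; each statement's English description precedes it below -/
import Mathlib

section
/- If {E_I : ∅ ≠ I ⊆ {1,...,d}} is a collection of independent random variables with E_I ~ Geo(1−p_I) (i.e. P(E_I > n) = p_Iⁿ), p_I ∈ [0,1], and τ_k := min{E_I : k ∈ I} for k = 1,...,d, then P(τ₁ > n₁, ..., τ_d > n_d) = ∏_{∅ ≠ I ⊆ {1,...,d}} p_I^{max_{i∈I} n_i} for all n₁,...,n_d ∈ ℕ₀. -/
open MeasureTheory ProbabilityTheory

/-!
Every coordinate `τ_k` survives beyond `n_k` exactly when every shock `E_I` survives beyond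
`max_{i ∈ I} n_i`, since `E_I` enters the minimum defining `τ_k` precisely for `k ∈ I`.
The survival event is thus an intersection of independent events, whose probabilities are
`p_I ^ (max_{i ∈ I} n_i)`.
-/

theorem Finset.forall_mem_lt_iff_sup_lt {ι α : Type*} [LinearOrder α] [OrderBot α]
    (s : Finset ι) (n : ι → α) (a : α) :
    (∀ k ∈ s, n k < a) ↔ (s.Nonempty → s.sup n < a) := by
  rcases s.eq_empty_or_nonempty with rfl | hs
  · simp
  · rw [← Finset.sup'_eq_sup hs, Finset.sup'_lt_iff]
    exact ⟨fun h _ => h, fun h => h hs⟩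

theorem forall_mem_lt_iff_forall_sup_lt {ι α : Type*} [LinearOrder α] [OrderBot α]
    (E : Finset ι → α) (n : ι → α) :
    (∀ k I, k ∈ I → n k < E I) ↔ ∀ I : Finset ι, I.Nonempty → I.sup n < E I := by
  rw [forall_comm]
  exact forall_congr' fun I => I.forall_mem_lt_iff_sup_lt n (E I)

/-- Survival function of the narrow-sense multivariate geometric distribution built
from independent geometric shocks `E_I ~ Geo(1 - p_I)`, one for every nonempty
subset `I` of `{1,…,d}`, via `τ_k = min {E_I : k ∈ I}`. -/
theorem narrow_sense_geometric_survival
    {Ω : Type*} [MeasurableSpace Ω] (μ : Measure Ω) [IsProbabilityMeasure μ]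
    (d : ℕ)
    (E : Finset (Fin d) → Ω → ℕ) (p : Finset (Fin d) → ℝ)
    (hp : ∀ I : Finset (Fin d), I.Nonempty → 0 ≤ p I ∧ p I ≤ 1)
    (hindep : iIndepFun (m := fun _ : {I : Finset (Fin d) // I.Nonempty} =>
      (inferInstance : MeasurableSpace ℕ)) (fun I => E I.1) μ)
    (hsurv : ∀ I : Finset (Fin d), I.Nonempty →
      ∀ n : ℕ, μ {ω | n < E I ω} = ENNReal.ofReal (p I ^ n))
    (τ : Fin d → Ω → ℕ)
    (hτ : ∀ (k : Fin d) (ω : Ω), τ k ω =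
      (Finset.univ.filter (fun I : Finset (Fin d) => k ∈ I)).inf'
        ⟨{k}, by simp⟩ (fun I => E I ω)) :
    ∀ n : Fin d → ℕ,
      μ {ω | ∀ k : Fin d, n k < τ k ω} =
        ENNReal.ofReal
          (∏ I ∈ Finset.univ.filter (fun I : Finset (Fin d) => I.Nonempty),
            p I ^ (I.sup n)) := by
  intro n
  have hevent : {ω | ∀ k, n k < τ k ω} =
      ⋂ I : {I : Finset (Fin d) // I.Nonempty}, E I.1 ⁻¹' Set.Ioi (I.1.sup n) := by
    ext ω
    simp only [Set.mem_ofPred_eq, Set.mem_iInter, Set.mem_preimage, Set.mem_Ioi, Subtype.forall]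
    rw [← forall_mem_lt_iff_forall_sup_lt]
    refine forall_congr' fun k => ?_
    rw [hτ]
    exact (Finset.lt_inf'_iff _).trans (by simp)
  rw [hevent, hindep.meas_iInter fun I => ⟨Set.Ioi (I.1.sup n), measurableSet_Ioi, rfl⟩,
    Finset.prod_subtype _ (p := Finset.Nonempty) (by simp) (fun I => p I ^ I.sup n),
    ENNReal.ofReal_prod_of_nonneg fun I _ => pow_nonneg (hp I.1 I.2).1 _]
  exact Finset.prod_congr rfl fun I _ => hsurv I.1 I.2 _
end

section
/- The narrow-sense multivariate geometric survival function F̄(n₁,...,n_d) = ∏_{∅≠I⊆{1,...,d}} p_I^{max_{i∈I} n_i} satisfies the local discrete multivariate lack-of-memory property: for every k ∈ {1,...,d}, indices 1 ≤ i₁ < ... < i_k ≤ d, and m, n_{i₁},...,n_{i_k} ∈ ℕ₀, one has F̄ evaluated at the vector with entries n_{i_j}+m at positions i_j and 0 elsewhere equals F̄ at (m,...,m at positions i_j, 0 elsewhere) times F̄ at (n_{i_j} at positions i_j, 0 elsewhere); equivalently P(τ_{i₁} > n_{i₁}+m, ..., τ_{i_k} > n_{i_k}+m) = P(τ_{i₁}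 > m,...,τ_{i_k} > m)·P(τ_{i₁} > n_{i₁},...,τ_{i_k} > n_{i_k}). -/
/-!
Restricting to `s` replaces the exponent `max_{i ∈ I} n_i` by `max_{i ∈ I ∩ s} n_i`, and shifting
by `m` on `s` adds `m` to it when `I` meets `s` (and leaves it `0` otherwise). Exponents add,
so every factor `p_I ^ _` splits into the corresponding factors of the two right-hand sides.
-/

namespace Finset

variable {ι M : Type*}

theorem sup_ite_mem_bot [SemilatticeSup M] [OrderBot M] [DecidableEq ι] (I s : Finset ι)
    (f : ι → M) : (I.sup fun i => if i ∈ s then f i else ⊥) = (I ∩ s).sup f := by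
  rw [sup_ite, filter_mem_eq_inter, sup_bot, sup_bot_eq]

section CanonicallyLinearOrderedAddCommMonoid

variable [AddCommMonoid M] [LinearOrder M] [CanonicallyOrderedAdd M] [Sub M]
  [AddLeftReflectLE M] [OrderedSub M] [OrderBot M]

theorem sup_add_const (J : Finset ι) (f : ι → M) (a : M) :
    (J.sup fun i => f i + a) = (J.sup fun _ => a) + J.sup f := by
  rcases J.eq_empty_or_nonempty with rfl | hJ
  · simp
  · rw [sup_const hJ, ← Finset.sup_add hJ, add_comm]

theorem sup_ite_mem_add_const [DecidableEq ι] (I s : Finset ι) (f : ι → M) (a : M) :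
    (I.sup fun i => if i ∈ s then f i + a else 0) =
      (I.sup fun i => if i ∈ s then a else 0) + I.sup fun i => if i ∈ s then f i else 0 := by
  simp only [← bot_eq_zero, sup_ite_mem_bot, sup_add_const]

end CanonicallyLinearOrderedAddCommMonoid

end Finset

theorem narrow_sense_geometric_local_LM_general
    (d : ℕ) (p : Finset (Fin d) → ℝ)
    (F : (Fin d → ℕ) → ℝ)
    (hF : ∀ n : Fin d → ℕ,
      F n = ∏ I ∈ Finset.univ.filter (fun I : Finset (Fin d) => I.Nonempty),
        p I ^ (I.sup n))
    (s : Finset (Fin d)) (m : ℕ) (n : Fin d → ℕ) :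
    F (fun i => if i ∈ s then n i + m else 0) =
      F (fun i => if i ∈ s then m else 0) * F (fun i => if i ∈ s then n i else 0) := by
  simp only [hF, ← Finset.prod_mul_distrib, ← pow_add, Finset.sup_ite_mem_add_const]

/-- The narrow-sense multivariate geometric survival function
`F̄(n₁,…,n_d) = ∏_{∅≠I⊆{1,…,d}} p_I ^ (max_{i∈I} n_i)` satisfies the local discrete
multivariate lack-of-memory property. -/
theorem narrow_sense_geometric_local_LM
    (d : ℕ) (p : Finset (Fin d) → ℝ)
    (hp : ∀ I : Finset (Fin d), I.Nonempty → 0 ≤ p I ∧ p I ≤ 1)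
    (hpfin : ∀ k : Fin d,
      ∏ I ∈ Finset.univ.filter (fun I : Finset (Fin d) => k ∈ I), p I < 1)
    (F : (Fin d → ℕ) → ℝ)
    (hF : ∀ n : Fin d → ℕ,
      F n = ∏ I ∈ Finset.univ.filter (fun I : Finset (Fin d) => I.Nonempty),
        p I ^ (I.sup n))
    (s : Finset (Fin d)) (hs : s.Nonempty) (m : ℕ) (n : Fin d → ℕ) :
    F (fun i => if i ∈ s then n i + m else 0) =
      F (fun i => if i ∈ s then m else 0) * F (fun i => if i ∈ s then n i else 0) :=
  narrow_sense_geometric_local_LM_general d p F hF s m n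
end

section
/- A d-dimensional discrete survival function on ℕ^d satisfies the local discrete lack-of-memory property if and only if it is the survival function of a d-variate wide-sense geometric distribution, i.e., it has the form F̄(n₁,...,n_d) = ∏_{k=1}^d ( Σ_{I ⊆ {1,...,d}, π(i) ∉ I ∀ i ≥ k} p̃_I )^{n_{(k)} − n_{(k−1)}}, where π sorts the arguments increasingly, n_{(1)} ≤ ... ≤ n_{(d)} are the order statistics, n_{(0)} := 0, and the p̃_I ∈ [0,1] satisfy Σ_I p̃_I = 1 and Σ_{I: k∉I} p̃_I < 1 for all k. -/
/-!
Write `F̄ n = P(∀ j, n j < τ j)` and `L_v(n) = {j | v < n j}`. The lack-of-memory property with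
`m = 1`, applied on the support `L_0(n)` of `n`, is the one-step recursion
`F̄ n = G(L_0(n)) · F̄(n - 1)` with `G(S) = P(∀ j ∈ S, 1 < τ j)`, so `F̄ n = ∏_{v < B} G(L_v(n))`
for every `B ≥ max n`; conversely such a layer product satisfies the recursion, and the recursion
gives back the lack-of-memory property by induction on `m`. As `τ ≥ 1`, `G(S)` is the probability
that the set of coordinates failing at time `1` avoids `S`, i.e. `∑_{I ∩ S = ∅} p̃_I` with
`p̃_I = P({j | τ j = 1} = I)`. The layers with `n_(k-1) ≤ v < n_(k)` all equal
`{π k, …, π (d-1)}`, which turns the layer product into the product over order statistics.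
Finally `G({k}) < 1`, since otherwise `P(m < τ k) = G({k})^m = 1` for every `m`.
-/

open MeasureTheory Finset

section LevelSets

variable {ι : Type*} [Fintype ι] {M : Type*} [CommMonoid M]

def levelSet (n : ι → ℕ) (v : ℕ) : Finset ι := {j | v < n j}

lemma levelSet_tsub_one (n : ι → ℕ) (v : ℕ) : levelSet (n - 1) v = levelSet n (v + 1) := by
  ext j
  simp only [levelSet, mem_filter, mem_univ, true_and, Pi.sub_apply, Pi.one_apply]
  omega

theorem step_iff_eq_prod_levelSet {Φ : (ι → ℕ) → M} {g : Finset ι → M} :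
    (Φ 0 = 1 ∧ ∀ n, Φ n = g (levelSet n 0) * Φ (n - 1)) ↔
      ∀ n B, (∀ j, n j ≤ B) → Φ n = ∏ v ∈ range B, g (levelSet n v) := by
  constructor
  · rintro ⟨h0, hstep⟩ n B
    induction B generalizing n with
    | zero =>
      intro hn
      rw [prod_range_zero, ← h0]
      congr 1
      ext j
      exact Nat.le_zero.1 (hn j)
    | succ B ih =>
      intro hn
      rw [hstep n, ih (n - 1) fun j => Nat.sub_le_of_le_add (hn j), prod_range_succ']
      simp only [levelSet_tsub_one]
      rw [mul_comm]
  · intro h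
    refine ⟨by simpa using h 0 0 (by simp), fun n => ?_⟩
    have hB : ∀ j, n j ≤ ∑ i, n i := fun j => single_le_sum (by simp) (mem_univ j)
    rw [h n _ fun j => (hB j).trans (Nat.le_succ _), prod_range_succ',
      h (n - 1) _ fun j => (Nat.sub_le _ _).trans (hB j)]
    simp only [levelSet_tsub_one]
    rw [mul_comm]

variable [DecidableEq ι]

lemma levelSet_piecewise_add_one (s : Finset ι) (f : ι → ℕ) :
    levelSet (s.piecewise (fun i => f i + 1) 0) 0 = s := by
  ext j
  by_cases hj : j ∈ s <;> simp [levelSet, hj]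

omit [Fintype ι] in
lemma piecewise_add_one_tsub_one (s : Finset ι) (f : ι → ℕ) :
    s.piecewise (fun i => f i + 1) 0 - 1 = s.piecewise f 0 := by
  ext j
  by_cases hj : j ∈ s <;> simp [hj]

lemma piecewise_levelSet_zero_tsub_one (n : ι → ℕ) :
    (levelSet n 0).piecewise (n - 1 : ι → ℕ) 0 = n - 1 := by
  ext j
  by_cases hj : n j = 0 <;> simp [levelSet, hj, Nat.pos_iff_ne_zero]

lemma piecewise_levelSet_zero_tsub_one_add_one (n : ι → ℕ) :
    (levelSet n 0).piecewise (fun i => (n - 1) i + 1) 0 = n := by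
  ext j
  by_cases hj : n j = 0 <;> simp [levelSet, hj, Nat.pos_iff_ne_zero]
  omega

variable {Φ : (ι → ℕ) → M} {g : Finset ι → M}

lemma piecewise_add_eq_pow_mul_of_step (hstep : ∀ n, Φ n = g (levelSet n 0) * Φ (n - 1))
    (s : Finset ι) (m : ℕ) (n : ι → ℕ) :
    Φ (s.piecewise (fun i => n i + m) 0) = g s ^ m * Φ (s.piecewise n 0) := by
  induction m with
  | zero => simp
  | succ m ih =>
    rw [hstep]
    simp only [← add_assoc, levelSet_piecewise_add_one, piecewise_add_one_tsub_one, ih, pow_succ]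
    rw [mul_assoc, mul_left_comm, mul_comm]

lemma piecewise_add_eq_mul_of_step (h0 : Φ 0 = 1)
    (hstep : ∀ n, Φ n = g (levelSet n 0) * Φ (n - 1)) (s : Finset ι) (m : ℕ) (n : ι → ℕ) :
    Φ (s.piecewise (fun i => n i + m) 0) =
      Φ (s.piecewise (fun _ => m) 0) * Φ (s.piecewise n 0) := by
  have hm := piecewise_add_eq_pow_mul_of_step hstep s m 0
  simp only [Pi.zero_apply, zero_add, piecewise_same, h0, mul_one] at hm
  rw [piecewise_add_eq_pow_mul_of_step hstep, hm]

lemma step_of_piecewise_add_eq_mul (h0 : Φ 0 = 1)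
    (hmul : ∀ s : Finset ι, s.Nonempty → ∀ m n, Φ (s.piecewise (fun i => n i + m) 0) =
      Φ (s.piecewise (fun _ => m) 0) * Φ (s.piecewise n 0)) (n : ι → ℕ) :
    Φ n = Φ ((levelSet n 0).piecewise (fun _ => 1) 0) * Φ (n - 1) := by
  obtain hs | hs := (levelSet n 0).eq_empty_or_nonempty
  · have hn : n = 0 := by
      ext j
      simpa [levelSet] using Finset.eq_empty_iff_forall_notMem.1 hs j
    rw [hs, piecewise_empty, hn]
    simp [h0]
  · simpa only [piecewise_levelSet_zero_tsub_one_add_one, piecewise_levelSet_zero_tsub_one]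
      using hmul _ hs 1 (n - 1)

end LevelSets

section OrderStatistics

variable {d : ℕ} {n : Fin d → ℕ} {π : Equiv.Perm (Fin d)}

lemma levelSet_eq_map_Ici_iff (hmono : Monotone (fun i => n (π i))) (v : ℕ) (k : Fin d) :
    levelSet n v = (Ici k).map π.toEmbedding ↔
      (if k.val = 0 then 0 else n (π ⟨k.val - 1, by omega⟩)) ≤ v ∧ v < n (π k) := by
  simp only [Finset.ext_iff, levelSet, mem_filter, mem_univ, true_and, mem_map_equiv, mem_Ici]
  constructor
  · intro h
    refine ⟨?_, by simpa using h (π k)⟩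
    split_ifs with hk
    · exact Nat.zero_le v
    · have := h (π ⟨k.val - 1, by omega⟩)
      simp only [Equiv.symm_apply_apply, Fin.le_def] at this
      omega
  · rintro ⟨hlo, hhi⟩ j
    obtain ⟨i, rfl⟩ := π.surjective j
    simp only [Equiv.symm_apply_apply]
    constructor
    · intro hv
      by_contra hik
      have hik : i.val < k.val := not_le.1 hik
      rw [if_neg (by omega)] at hlo
      have := hmono (show i ≤ ⟨k.val - 1, by omega⟩ from Fin.le_def.2 (by simp only; omega))
      simp only at this
      omega
    · intro hki
      exact hhi.trans_le (hmono hki)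

lemma levelSet_eq_empty_or_exists_eq_map_Ici (hmono : Monotone (fun i => n (π i))) (v : ℕ) :
    levelSet n v = ∅ ∨ ∃ k, levelSet n v = (Ici k).map π.toEmbedding := by
  obtain h | h := (levelSet n v).eq_empty_or_nonempty
  · exact Or.inl h
  · right
    have hne : ({i | v < n (π i)} : Finset (Fin d)).Nonempty := by
      obtain ⟨j, hj⟩ := h
      exact ⟨π.symm j, by simpa [levelSet] using hj⟩
    refine ⟨({i | v < n (π i)} : Finset (Fin d)).min' hne, Finset.ext fun j => ?_⟩
    obtain ⟨i, rfl⟩ := π.surjective j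
    simp only [levelSet, mem_filter, mem_univ, true_and, mem_map_equiv, mem_Ici,
      Equiv.symm_apply_apply]
    exact ⟨fun hi => min'_le _ _ (by simpa using hi),
      fun hi => (by simpa using min'_mem _ hne : v < _).trans_le (hmono hi)⟩

theorem prod_range_levelSet_eq_prod_pow {M : Type*} [CommMonoid M] (g : Finset (Fin d) → M)
    (hg : g ∅ = 1) (hmono : Monotone (fun i => n (π i))) (B : ℕ) (hB : ∀ j, n j ≤ B) :
    ∏ v ∈ range B, g (levelSet n v) = ∏ k : Fin d, g ((Ici k).map π.toEmbedding) ^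
      (n (π k) - (if k.val = 0 then 0 else n (π ⟨k.val - 1, by omega⟩))) := by
  have hinj : ∀ k l : Fin d, (Ici k).map π.toEmbedding = (Ici l).map π.toEmbedding ↔ k = l := by
    refine fun k l => ⟨fun hkl => le_antisymm ?_ ?_, fun h => h ▸ rfl⟩
    · simpa using Finset.ext_iff.1 hkl (π l)
    · simpa using Finset.ext_iff.1 hkl (π k)
  calc ∏ v ∈ range B, g (levelSet n v)
      = ∏ v ∈ range B, ∏ k : Fin d, if levelSet n v = (Ici k).map π.toEmbedding
          then g ((Ici k).map π.toEmbedding) else 1 := by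
        refine prod_congr rfl fun v _ => ?_
        obtain h | ⟨k, h⟩ := levelSet_eq_empty_or_exists_eq_map_Ici hmono v
        · refine h ▸ hg.trans (prod_eq_one fun k _ => if_neg ?_).symm
          exact (Finset.nonempty_iff_ne_empty.1 ⟨π k, by simp⟩).symm
        · simp [h, hinj]
    _ = ∏ k : Fin d, ∏ v ∈ range B,
          if v ∈ Ico (if k.val = 0 then 0 else n (π ⟨k.val - 1, by omega⟩)) (n (π k))
          then g ((Ici k).map π.toEmbedding) else 1 := by
        rw [prod_comm]
        simp only [levelSet_eq_map_Ici_iff hmono, mem_Ico]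
    _ = _ := by
        refine prod_congr rfl fun k _ => ?_
        rw [prod_ite_mem, inter_eq_right.2, prod_const, Nat.card_Ico]
        exact range_eq_Ico B ▸ Ico_subset_Ico (Nat.zero_le _) (hB _)

lemma disjoint_map_Ici_iff (π : Equiv.Perm (Fin d)) (I : Finset (Fin d)) (k : Fin d) :
    Disjoint I ((Ici k).map π.toEmbedding) ↔ ∀ i, k ≤ i → π i ∉ I := by
  rw [disjoint_comm, disjoint_left]
  simp only [mem_map_equiv, mem_Ici]
  exact ⟨fun h i hi => h (by simpa using hi), fun h a ha => by simpa using h _ ha⟩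

lemma forall_perm_eq_prod_pow_iff {M : Type*} [CommMonoid M] (F : (Fin d → ℕ) → M)
    (g : Finset (Fin d) → M) (hg : g ∅ = 1) :
    (∀ (n : Fin d → ℕ) (π : Equiv.Perm (Fin d)), Monotone (fun i => n (π i)) →
      F n = ∏ k : Fin d, g ((Ici k).map π.toEmbedding) ^
        (n (π k) - (if k.val = 0 then 0 else n (π ⟨k.val - 1, by omega⟩)))) ↔
    ∀ n B, (∀ j, n j ≤ B) → F n = ∏ v ∈ range B, g (levelSet n v) := by
  constructor
  · intro h n B hB
    rw [h n _ (Tuple.monotone_sort n),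
      prod_range_levelSet_eq_prod_pow g hg (Tuple.monotone_sort n) B hB]
  · intro h n π hmono
    have hB : ∀ j, n j ≤ ∑ i, n i := fun j => single_le_sum (by simp) (mem_univ j)
    rw [h n _ hB, prod_range_levelSet_eq_prod_pow g hg hmono _ hB]

end OrderStatistics

lemma exists_measureReal_lt_lt_one {Ω : Type*} [MeasurableSpace Ω] (μ : Measure Ω)
    [IsProbabilityMeasure μ] (X : Ω → ℕ) (hX : Measurable X) :
    ∃ m : ℕ, (μ {ω | m < X ω}).toReal < 1 := by
  by_contra! h
  have hae : ∀ m : ℕ, ∀ᵐ ω ∂μ, m < X ω := fun m => by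
    rw [ae_iff_measure_eq (measurableSet_lt measurable_const hX).nullMeasurableSet,
      measure_univ, ← ENNReal.toReal_eq_one_iff]
    exact le_antisymm measureReal_le_one (h m)
  obtain ⟨ω, hω⟩ := (ae_all_iff.2 hae).exists
  exact lt_irrefl _ (hω (X ω))

lemma setOf_forall_mem_lt_eq {Ω ι : Type*} [DecidableEq ι] {τ : ι → Ω → ℕ}
    (hτ : ∀ i ω, 0 < τ i ω) (s : Finset ι) (f : ι → ℕ) :
    {ω | ∀ i ∈ s, f i < τ i ω} = {ω | ∀ i, s.piecewise f 0 i < τ i ω} := by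
  ext ω
  refine forall_congr' fun i => ?_
  by_cases hi : i ∈ s <;> simp [hi, hτ i ω]

section Survival

variable {Ω : Type*} [MeasurableSpace Ω] (μ : Measure Ω) {ι : Type*} (τ : ι → Ω → ℕ)

def survival (n : ι → ℕ) : ℝ := (μ {ω | ∀ i, n i < τ i ω}).toReal

def firstFailures [Fintype ι] (ω : Ω) : Finset ι := {i | τ i ω = 1}

variable {μ τ}

lemma survival_zero [IsProbabilityMeasure μ] (hτ : ∀ i ω, 0 < τ i ω) : survival μ τ 0 = 1 := by
  simp [survival, hτ]

lemma lackOfMemory_iff_survival [IsFiniteMeasure μ] [DecidableEq ι] (hτ : ∀ i ω, 0 < τ i ω) :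
    (∀ s : Finset ι, s.Nonempty → ∀ (m : ℕ) (n : ι → ℕ),
      μ {ω | ∀ i ∈ s, n i + m < τ i ω} =
        μ {ω | ∀ i ∈ s, m < τ i ω} * μ {ω | ∀ i ∈ s, n i < τ i ω}) ↔
    ∀ s : Finset ι, s.Nonempty → ∀ (m : ℕ) (n : ι → ℕ),
      survival μ τ (s.piecewise (fun i => n i + m) 0) =
        survival μ τ (s.piecewise (fun _ => m) 0) * survival μ τ (s.piecewise n 0) := by
  simp only [survival, setOf_forall_mem_lt_eq hτ, ← ENNReal.toReal_mul]
  refine forall₂_congr fun s _ => forall₂_congr fun m n => ?_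
  exact (ENNReal.toReal_eq_toReal_iff' (measure_ne_top μ _)
    (ENNReal.mul_ne_top (measure_ne_top μ _) (measure_ne_top μ _))).symm

variable [Fintype ι]

lemma measurableSet_firstFailures_preimage (hmeas : ∀ i, Measurable (τ i)) (I : Finset ι) :
    MeasurableSet (firstFailures τ ⁻¹' {I}) :=
  measurable_pi_lambda (fun ω i => τ i ω) hmeas
    (Set.to_countable {x : ι → ℕ | ({i | x i = 1} : Finset ι) = I}).measurableSet

lemma survival_piecewise_one [IsFiniteMeasure μ] [DecidableEq ι] (hτ : ∀ i ω, 0 < τ i ω)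
    (hmeas : ∀ i, Measurable (τ i)) (S : Finset ι) :
    survival μ τ (S.piecewise (fun _ => 1) 0) =
      ∑ I with Disjoint I S, (μ (firstFailures τ ⁻¹' {I})).toReal := by
  have hset : {ω | ∀ i ∈ S, 1 < τ i ω} =
      firstFailures τ ⁻¹' ↑({I | Disjoint I S} : Finset (Finset ι)) := by
    ext ω
    simp only [Set.mem_ofPred_eq, Set.mem_preimage, coe_filter, mem_univ, true_and,
      firstFailures, disjoint_left, mem_filter]
    refine ⟨fun h i h1 hi => (h i hi).ne' h1, fun h i hi => ?_⟩
    have := hτ i ω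
    by_contra h'
    exact h (by omega) hi
  rw [survival, ← setOf_forall_mem_lt_eq hτ, hset,
    ← sum_measure_preimage_singleton _ fun I _ => measurableSet_firstFailures_preimage hmeas I,
    ENNReal.toReal_sum fun _ _ => measure_ne_top μ _]

lemma apply_singleton_lt_one_of_step [IsProbabilityMeasure μ] [DecidableEq ι]
    (hτ : ∀ i ω, 0 < τ i ω) (hmeas : ∀ i, Measurable (τ i)) {g : Finset ι → ℝ}
    (hstep : ∀ n, survival μ τ n = g (levelSet n 0) * survival μ τ (n - 1)) (k : ι) :
    g {k} < 1 := by
  obtain ⟨m, hm⟩ := exists_measureReal_lt_lt_one μ (τ k) (hmeas k)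
  have hpow := piecewise_add_eq_pow_mul_of_step hstep {k} m 0
  simp only [Pi.zero_apply, zero_add, piecewise_same, survival_zero hτ, mul_one] at hpow
  have hsingle : survival μ τ (({k} : Finset ι).piecewise (fun _ => m) 0) =
      (μ {ω | m < τ k ω}).toReal := by
    rw [survival, ← setOf_forall_mem_lt_eq hτ]
    simp
  by_contra! h
  exact (one_le_pow₀ (n := m) h).not_gt (hpow ▸ hsingle ▸ hm)

end Survival

theorem wide_sense_geometric_characterization_general
    {Ω : Type*} [MeasurableSpace Ω] (μ : Measure Ω) [IsProbabilityMeasure μ]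
    (d : ℕ)
    (τ : Fin d → Ω → ℕ) (hmeas : ∀ k, Measurable (τ k))
    (hτ1 : ∀ (k : Fin d) (ω : Ω), 1 ≤ τ k ω) :
    (∀ s : Finset (Fin d), s.Nonempty → ∀ (m : ℕ) (n : Fin d → ℕ),
        μ {ω | ∀ i ∈ s, n i + m < τ i ω} =
          μ {ω | ∀ i ∈ s, m < τ i ω} * μ {ω | ∀ i ∈ s, n i < τ i ω})
    ↔
    (∃ p : Finset (Fin d) → ℝ,
        (∀ I : Finset (Fin d), 0 ≤ p I ∧ p I ≤ 1) ∧
        (∑ I : Finset (Fin d), p I = 1) ∧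
        (∀ k : Fin d,
          ∑ I ∈ Finset.univ.filter (fun I : Finset (Fin d) => k ∉ I), p I < 1) ∧
        ∀ (n : Fin d → ℕ) (π : Equiv.Perm (Fin d)), Monotone (fun i => n (π i)) →
          (μ {ω | ∀ k : Fin d, n k < τ k ω}).toReal =
            ∏ k : Fin d,
              (∑ I ∈ Finset.univ.filter
                  (fun I : Finset (Fin d) => ∀ i : Fin d, k ≤ i → π i ∉ I), p I) ^
                (n (π k) - (if k.val = 0 then 0 else
                  n (π ⟨k.val - 1, Nat.lt_of_le_of_lt (Nat.sub_le _ _) k.isLt⟩)))) := by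
  have h0 := survival_zero (μ := μ) hτ1
  rw [lackOfMemory_iff_survival (μ := μ) hτ1]
  constructor
  · intro hmul
    let p : Finset (Fin d) → ℝ := fun I => (μ (firstFailures τ ⁻¹' {I})).toReal
    let g : Finset (Fin d) → ℝ := fun S => ∑ I with Disjoint I S, p I
    have hstep : ∀ n, survival μ τ n = g (levelSet n 0) * survival μ τ (n - 1) := fun n => by
      rw [step_of_piecewise_add_eq_mul h0 hmul n, survival_piecewise_one hτ1 hmeas]
    have hp1 : ∑ I, p I = 1 := by
      simpa [h0] using (survival_piecewise_one (μ := μ) hτ1 hmeas ∅).symm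
    refine ⟨p, fun I => ⟨ENNReal.toReal_nonneg, measureReal_le_one⟩, hp1,
      fun k => by simpa [g] using apply_singleton_lt_one_of_step hτ1 hmeas hstep k, ?_⟩
    simp only [← disjoint_map_Ici_iff]
    exact (forall_perm_eq_prod_pow_iff (survival μ τ) g (by simpa [g] using hp1)).2
      (step_iff_eq_prod_levelSet.1 ⟨h0, hstep⟩)
  · rintro ⟨p, -, hp1, -, hform⟩
    let g : Finset (Fin d) → ℝ := fun S => ∑ I with Disjoint I S, p I
    simp only [← disjoint_map_Ici_iff] at hform
    obtain ⟨h0, hstep⟩ := (step_iff_eq_prod_levelSet (g := g)).2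
      ((forall_perm_eq_prod_pow_iff (survival μ τ) g (by simpa [g] using hp1)).1 hform)
    exact fun s _ => piecewise_add_eq_mul_of_step h0 hstep s

/-- A discrete survival function on `ℕ^d` (values in `{1,2,…}`) satisfies the local
discrete lack-of-memory property if and only if it is the survival function of a
`d`-variate wide-sense geometric distribution. -/
theorem wide_sense_geometric_characterization
    {Ω : Type*} [MeasurableSpace Ω] (μ : Measure Ω) [IsProbabilityMeasure μ]
    (d : ℕ) (hd : 0 < d)
    (τ : Fin d → Ω → ℕ) (hmeas : ∀ k, Measurable (τ k))
    (hτ1 : ∀ (k : Fin d) (ω : Ω), 1 ≤ τ k ω) :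
    (∀ s : Finset (Fin d), s.Nonempty → ∀ (m : ℕ) (n : Fin d → ℕ),
        μ {ω | ∀ i ∈ s, n i + m < τ i ω} =
          μ {ω | ∀ i ∈ s, m < τ i ω} * μ {ω | ∀ i ∈ s, n i < τ i ω})
    ↔
    (∃ p : Finset (Fin d) → ℝ,
        (∀ I : Finset (Fin d), 0 ≤ p I ∧ p I ≤ 1) ∧
        (∑ I : Finset (Fin d), p I = 1) ∧
        (∀ k : Fin d,
          ∑ I ∈ Finset.univ.filter (fun I : Finset (Fin d) => k ∉ I), p I < 1) ∧
        ∀ (n : Fin d → ℕ) (π : Equiv.Perm (Fin d)), Monotone (fun i => n (π i)) →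
          (μ {ω | ∀ k : Fin d, n k < τ k ω}).toReal =
            ∏ k : Fin d,
              (∑ I ∈ Finset.univ.filter
                  (fun I : Finset (Fin d) => ∀ i : Fin d, k ≤ i → π i ∉ I), p I) ^
                (n (π k) - (if k.val = 0 then 0 else
                  n (π ⟨k.val - 1, Nat.lt_of_le_of_lt (Nat.sub_le _ _) k.isLt⟩)))) :=
  wide_sense_geometric_characterization_general μ d τ hmeas hτ1
end

section
/- For a finite real sequence (x₀, ..., x_{d−1}), the d-monotonicity conditions ∇ʲx_k := Σ_{i=0}^{j} (−1)ⁱ C(j,i) x_{k+i} ≥ 0 for all k = 0,...,d−1 and j = 0,...,d−1−k are equivalent to the conditions ∇^{d−1−k} x_k ≥ 0 for k = 0,...,d−1. -/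
/-!
Since `∇ʲ⁺¹x_k = ∇ʲx_k − ∇ʲx_{k+1}`, the conditions `∇ʲ⁺¹x_k ≥ 0` and `∇ʲx_{k+1} ≥ 0` give
`∇ʲx_k ≥ 0`. So all conditions with `k + j ≤ d − 1` follow from those on the top diagonal
`k + j = d − 1` by descending induction on `k + j`.
-/

open Finset fwdDiff

section Ring

variable {R : Type*} [Ring R]

/-- The paper's `∇ʲ x_k`. -/
def altDiff (x : ℕ → R) (j k : ℕ) : R :=
  ∑ i ∈ range (j + 1), (-1 : R) ^ i * (j.choose i : R) * x (k + i)

theorem altDiff_eq_neg_one_pow_mul_fwdDiff_iter (x : ℕ → R) (j k : ℕ) :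
    altDiff x j k = (-1) ^ j * (Δ_[1])^[j] x k := by
  rw [fwdDiff_iter_eq_sum_shift, mul_sum]
  refine sum_congr rfl fun i hi ↦ ?_
  have hij : i ≤ j := Nat.lt_succ_iff.mp (mem_range.mp hi)
  have hsign : (-1 : R) ^ j * (-1) ^ (j - i) = (-1) ^ i := by
    rw [← pow_add, show j + (j - i) = i + 2 * (j - i) by omega, pow_add, pow_mul, neg_one_sq,
      one_pow, mul_one]
  rw [zsmul_eq_mul, smul_eq_mul, mul_one, ← mul_assoc]
  push_cast
  rw [← mul_assoc, hsign]

theorem altDiff_succ (x : ℕ → R) (j k : ℕ) :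
    altDiff x (j + 1) k = altDiff x j k - altDiff x j (k + 1) := by
  simp only [altDiff_eq_neg_one_pow_mul_fwdDiff_iter, Function.iterate_succ_apply', fwdDiff,
    pow_succ]
  noncomm_ring

end Ring

theorem altDiff_nonneg_of_nonneg_top {R : Type*} [Ring R] [PartialOrder R]
    [IsOrderedAddMonoid R] {x : ℕ → R} {d : ℕ} (htop : ∀ k < d, 0 ≤ altDiff x (d - 1 - k) k)
    {k j : ℕ} (hkj : k + j + 1 ≤ d) : 0 ≤ altDiff x j k := by
  obtain ⟨m, hm⟩ : ∃ m, k + j + m + 1 = d := ⟨d - (k + j + 1), by omega⟩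
  induction m generalizing k j with
  | zero => simpa [show j = d - 1 - k by omega] using htop k (by omega)
  | succ m ih =>
    have hstep := ih (k := k) (j := j + 1) (by omega) (by omega)
    have hshift := ih (k := k + 1) (j := j) (by omega) (by omega)
    rw [altDiff_succ, sub_nonneg] at hstep
    exact hshift.trans hstep

theorem d_monotone_iff_top_differences_general
    (d : ℕ) (x : ℕ → ℝ) :
    (∀ k j : ℕ, k + j + 1 ≤ d →
        0 ≤ ∑ i ∈ Finset.range (j + 1),
          (-1 : ℝ) ^ i * (Nat.choose j i : ℝ) * x (k + i))
    ↔
    (∀ k : ℕ, k < d →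
        0 ≤ ∑ i ∈ Finset.range (d - 1 - k + 1),
          (-1 : ℝ) ^ i * (Nat.choose (d - 1 - k) i : ℝ) * x (k + i)) :=
  ⟨fun h k hk ↦ h k (d - 1 - k) (by omega),
    fun h _ _ hkj ↦ altDiff_nonneg_of_nonneg_top (x := x) h hkj⟩

/-- For a finite real sequence `(x₀, …, x_{d-1})`, the full set of `d`-monotonicity
conditions `∇ʲ x_k ≥ 0` (for `k + j ≤ d - 1`) is equivalent to the conditions
`∇^{d-1-k} x_k ≥ 0` for `k = 0, …, d-1`. -/
theorem d_monotone_iff_top_differences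
    (d : ℕ) (hd : 1 ≤ d) (x : ℕ → ℝ) :
    (∀ k j : ℕ, k + j + 1 ≤ d →
        0 ≤ ∑ i ∈ Finset.range (j + 1),
          (-1 : ℝ) ^ i * (Nat.choose j i : ℝ) * x (k + i))
    ↔
    (∀ k : ℕ, k < d →
        0 ≤ ∑ i ∈ Finset.range (d - 1 - k + 1),
          (-1 : ℝ) ^ i * (Nat.choose (d - 1 - k) i : ℝ) * x (k + i)) :=
  d_monotone_iff_top_differences_general d x
end

section
/- Every completely log-monotone sequence is completely monotone: if {x_k}_{k∈ℕ₀} is a sequence of strictly positive reals with x₀ = 1 such that ∇ʲ(ln x_k) ≥ 0 for all k ∈ ℕ₀ and j ∈ ℕ, then ∇ʲ x_k ≥ 0 for all j, k ∈ ℕ₀. -/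
/-!
Put `w m = log x m - log x N`. Since `log x` is decreasing, `w ≥ 0` on `{0, …, N}`, and the
higher differences of `w` are those of `log x`; so `w` satisfies every inequality of complete
monotonicity that involves only `w 0, …, w N`. These finitely many inequalities are preserved by
products (discrete Leibniz rule `∇(uv) = u ∇v + ∇u · v(· + 1)`), by nonnegative linear
combinations and by pointwise limits, hence by `exp` through its power series. Finally
`x = x N • exp w`, and `N` is arbitrary.
-/

open Finset Function Filter Topology

/-- `(∇u) k = u k - u (k + 1)`, so that `nabla^[j]` is the operator `∇ʲ`. -/
def nabla (u : ℕ → ℝ) (k : ℕ) : ℝ := u k - u (k + 1)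

lemma nabla_iterate_eq_fwdDiff (j : ℕ) (u : ℕ → ℝ) :
    nabla^[j] u = (-1 : ℝ) ^ j • (fwdDiff 1)^[j] u := by
  induction j generalizing u with
  | zero => simp
  | succ j ih =>
    have h : nabla u = (-1 : ℝ) • fwdDiff 1 u := by
      funext k
      simp only [nabla, fwdDiff, Pi.smul_apply, smul_eq_mul]
      ring
    rw [iterate_succ_apply, h, ih, fwdDiff_iter_const_smul, smul_smul, ← iterate_succ_apply,
      pow_succ]

lemma nabla_iterate_apply (j : ℕ) (u : ℕ → ℝ) (k : ℕ) :
    nabla^[j] u k = ∑ i ∈ range (j + 1), (-1 : ℝ) ^ i * (j.choose i : ℝ) * u (k + i) := by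
  rw [nabla_iterate_eq_fwdDiff, Pi.smul_apply, fwdDiff_iter_eq_sum_shift, smul_eq_mul, mul_sum]
  refine sum_congr rfl fun i hi => ?_
  have hij : i ≤ j := Nat.lt_succ_iff.mp (mem_range.mp hi)
  have hsign : (-1 : ℝ) ^ j * (-1) ^ (j - i) = (-1) ^ i := by
    rw [← pow_add, show j + (j - i) = i + 2 * (j - i) by omega, pow_add, pow_mul]
    simp
  rw [zsmul_eq_mul, smul_eq_mul]
  push_cast
  rw [mul_one, ← hsign]
  ring

lemma nabla_iterate_finsetSum {α : Type*} (s : Finset α) (f : α → ℕ → ℝ) (j : ℕ) :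
    nabla^[j] (∑ a ∈ s, f a) = ∑ a ∈ s, nabla^[j] (f a) := by
  simp only [nabla_iterate_eq_fwdDiff, fwdDiff_iter_finsetSum, smul_sum]

lemma nabla_iterate_add (u v : ℕ → ℝ) (j : ℕ) :
    nabla^[j] (u + v) = nabla^[j] u + nabla^[j] v := by
  simp only [nabla_iterate_eq_fwdDiff, fwdDiff_iter_add, smul_add]

lemma nabla_iterate_const_smul (c : ℝ) (u : ℕ → ℝ) (j : ℕ) :
    nabla^[j] (c • u) = c • nabla^[j] u := by
  rw [nabla_iterate_eq_fwdDiff, nabla_iterate_eq_fwdDiff, fwdDiff_iter_const_smul, smul_comm]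

lemma nabla_iterate_succ_add_const (u : ℕ → ℝ) (c : ℝ) (j : ℕ) :
    nabla^[j + 1] (fun m => u m + c) = nabla^[j + 1] u := by
  rw [iterate_succ_apply, iterate_succ_apply]
  congr 1
  funext k
  simp only [nabla]
  ring

lemma nabla_iterate_succ_const (c : ℝ) (j : ℕ) : nabla^[j + 1] (fun _ => c) = 0 := by
  have h := nabla_iterate_succ_add_const 0 c j
  simp only [Pi.zero_apply, zero_add] at h
  rw [h, iterate_fixed (by funext k; simp [nabla])]

lemma nabla_iterate_comp_succ (j : ℕ) (u : ℕ → ℝ) :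
    nabla^[j] (fun m => u (m + 1)) = fun m => nabla^[j] u (m + 1) :=
  (Commute.iterate_left (f := nabla) (g := fun u m => u (m + 1)) (fun _ => rfl) j) u

/-- `u` satisfies the inequalities of complete monotonicity `0 ≤ ∇ʲ u k` that involve only the
terms `u 0, …, u N`. -/
def CompletelyMonotoneUpTo (N : ℕ) (u : ℕ → ℝ) : Prop :=
  ∀ j k, k + j ≤ N → 0 ≤ nabla^[j] u k

namespace CompletelyMonotoneUpTo

variable {N : ℕ} {u v : ℕ → ℝ}

lemma one (N : ℕ) : CompletelyMonotoneUpTo N 1 := by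
  rintro (_ | j) k -
  · simp
  · simp [show (1 : ℕ → ℝ) = fun _ => 1 from rfl, nabla_iterate_succ_const]

lemma mono {M : ℕ} (hu : CompletelyMonotoneUpTo N u) (hMN : M ≤ N) :
    CompletelyMonotoneUpTo M u :=
  fun j k hk => hu j k (hk.trans hMN)

lemma diff (hu : CompletelyMonotoneUpTo (N + 1) u) : CompletelyMonotoneUpTo N (nabla u) :=
  fun j k hk => by simpa only [← iterate_succ_apply] using hu (j + 1) k (by omega)

lemma shift (hu : CompletelyMonotoneUpTo (N + 1) u) :
    CompletelyMonotoneUpTo N (fun m => u (m + 1)) :=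
  fun j k hk => by simpa only [nabla_iterate_comp_succ] using hu j (k + 1) (by omega)

lemma mul (hu : CompletelyMonotoneUpTo N u) (hv : CompletelyMonotoneUpTo N v) :
    CompletelyMonotoneUpTo N (u * v) := by
  intro j
  induction j generalizing N u v with
  | zero => exact fun k hk => mul_nonneg (hu 0 k hk) (hv 0 k hk)
  | succ j ih =>
    intro k hk
    obtain ⟨N, rfl⟩ : ∃ M, N = M + 1 := ⟨N - 1, by omega⟩
    have leibniz : nabla (u * v) = u * nabla v + nabla u * fun m => v (m + 1) := by
      funext m
      simp only [nabla, Pi.add_apply, Pi.mul_apply]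
      ring
    rw [iterate_succ_apply, leibniz, nabla_iterate_add, Pi.add_apply]
    exact add_nonneg (ih (hu.mono N.le_succ) hv.diff k (by omega))
      (ih hu.diff hv.shift k (by omega))

lemma pow (hu : CompletelyMonotoneUpTo N u) (n : ℕ) : CompletelyMonotoneUpTo N (u ^ n) := by
  induction n with
  | zero => simpa using one N
  | succ n ih => simpa only [pow_succ] using ih.mul hu

lemma const_smul (hu : CompletelyMonotoneUpTo N u) {c : ℝ} (hc : 0 ≤ c) :
    CompletelyMonotoneUpTo N (c • u) := fun j k hk => by
  simpa only [nabla_iterate_const_smul, Pi.smul_apply, smul_eq_mul] using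
    mul_nonneg hc (hu j k hk)

lemma sum {α : Type*} {s : Finset α} {f : α → ℕ → ℝ}
    (hf : ∀ a ∈ s, CompletelyMonotoneUpTo N (f a)) :
    CompletelyMonotoneUpTo N (∑ a ∈ s, f a) :=
  fun j k hk => by
    simpa only [nabla_iterate_finsetSum, Finset.sum_apply] using
      sum_nonneg fun a ha => hf a ha j k hk

lemma of_tendsto {ι : Type*} {l : Filter ι} [l.NeBot] {F : ι → ℕ → ℝ} {f : ℕ → ℝ}
    (hF : ∀ᶠ n in l, CompletelyMonotoneUpTo N (F n))
    (hlim : ∀ m, Tendsto (fun n => F n m) l (𝓝 (f m))) : CompletelyMonotoneUpTo N f := by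
  intro j k hk
  rw [nabla_iterate_apply]
  refine ge_of_tendsto (tendsto_finsetSum _ fun i _ => (hlim (k + i)).const_mul _) ?_
  filter_upwards [hF] with n hn
  simpa only [nabla_iterate_apply] using hn j k hk

lemma exp (hu : CompletelyMonotoneUpTo N u) :
    CompletelyMonotoneUpTo N (fun m => Real.exp (u m)) := by
  refine of_tendsto (l := atTop)
    (F := fun M => ∑ n ∈ range M, ((n.factorial : ℝ)⁻¹) • u ^ n) ?_ fun m => ?_
  · exact Eventually.of_forall fun M =>
      sum fun n _ => (hu.pow n).const_smul (by positivity)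
  · have h := (NormedSpace.expSeries_div_hasSum_exp (u m)).tendsto_sum_nat
    rw [← Real.exp_eq_exp_ℝ] at h
    simpa only [Finset.sum_apply, Pi.smul_apply, Pi.pow_apply, smul_eq_mul, inv_mul_eq_div]
      using h

end CompletelyMonotoneUpTo

lemma completelyMonotoneUpTo_sub_apply {L : ℕ → ℝ}
    (hL : ∀ j k, 1 ≤ j → 0 ≤ nabla^[j] L k) (N : ℕ) :
    CompletelyMonotoneUpTo N (fun m => L m - L N) := by
  rintro (_ | j) k hk
  · have hanti : Antitone L := antitone_nat_of_succ_le fun n => by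
      simpa [nabla] using hL 1 n le_rfl
    simpa using hanti (show k ≤ N by omega)
  · simpa only [sub_eq_add_neg, nabla_iterate_succ_add_const] using hL (j + 1) k (by omega)

lemma completelyMonotoneUpTo_of_log {x : ℕ → ℝ} (hpos : ∀ k, 0 < x k)
    (hlog : ∀ j k, 1 ≤ j → 0 ≤ nabla^[j] (fun m => Real.log (x m)) k) (N : ℕ) :
    CompletelyMonotoneUpTo N x := by
  have hx : x = Real.exp (Real.log (x N)) •
      fun m => Real.exp (Real.log (x m) - Real.log (x N)) := by
    funext m
    simp [← Real.exp_add, Real.exp_log (hpos m)]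
  rw [hx]
  exact (completelyMonotoneUpTo_sub_apply hlog N).exp.const_smul (Real.exp_pos _).le

theorem completely_log_monotone_is_completely_monotone_general
    (x : ℕ → ℝ) (hpos : ∀ k, 0 < x k)
    (hlog : ∀ k j : ℕ, 1 ≤ j →
      0 ≤ ∑ i ∈ Finset.range (j + 1),
        (-1 : ℝ) ^ i * (Nat.choose j i : ℝ) * Real.log (x (k + i))) :
    ∀ j k : ℕ,
      0 ≤ ∑ i ∈ Finset.range (j + 1),
        (-1 : ℝ) ^ i * (Nat.choose j i : ℝ) * x (k + i) := by
  intro j k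
  have hlog' : ∀ j k, 1 ≤ j → 0 ≤ nabla^[j] (fun m => Real.log (x m)) k := fun j k hj => by
    simpa only [nabla_iterate_apply] using hlog k j hj
  simpa only [nabla_iterate_apply] using
    completelyMonotoneUpTo_of_log hpos hlog' (k + j) j k le_rfl

/-- Every completely log-monotone sequence is completely monotone. -/
theorem completely_log_monotone_is_completely_monotone
    (x : ℕ → ℝ) (hpos : ∀ k, 0 < x k) (hx0 : x 0 = 1)
    (hlog : ∀ k j : ℕ, 1 ≤ j →
      0 ≤ ∑ i ∈ Finset.range (j + 1),
        (-1 : ℝ) ^ i * (Nat.choose j i : ℝ) * Real.log (x (k + i))) :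
    ∀ j k : ℕ,
      0 ≤ ∑ i ∈ Finset.range (j + 1),
        (-1 : ℝ) ^ i * (Nat.choose j i : ℝ) * x (k + i) :=
  completely_log_monotone_is_completely_monotone_general x hpos hlog
end

section
/- Let {X_k}_{k∈ℕ} be i.i.d. [0,∞]-valued random variables with P(X₁ = 0) < 1, let {E_k}_{k∈ℕ} be i.i.d. Exp(1) random variables independent of {X_k}, and define τ_k := min{n ∈ ℕ : X₁ + ... + X_n ≥ E_k}. Then for every d ≥ 2 and all n₁,...,n_d ∈ ℕ₀: P(τ₁ > n₁, ..., τ_d > n_d) = ∏_{k=1}^{d} β_k^{n_{(d−k+1)} − n_{(d−k)}}, where β_k := E[e^{−kX₁}], n_{(1)} ≤ ... ≤ n_{(d)} are the order statistics of (n₁,...,n_d), and n_{(0)} := 0. -/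
/-
Since `P(t < E) = e^{-t}` and the `E_k` are independent of the walk, conditioning on the walk gives
`P(S_{n_1} < E_1, …, S_{n_d} < E_d) = E[∏_k e^{-S_{n_k}}]`, where `S_n = X₁ + ⋯ + X_n`; this event
is a.s. the event `τ_k > n_k` for all `k`, because the walk diverges (second Borel–Cantelli lemma)
and `0 < E_k < ∞` a.s. Writing `∏_k e^{-S_{n_k}} = ∏_i e^{-c_i X_i}` with
`c_i = #{k | i < n_k}` and using that the `X_i` are i.i.d., the expectation is `∏_i β_{c_i}`;
the count `c_i` equals `d - k + 1` exactly on the `n_{(k)} - n_{(k-1)}` indices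
`n_{(k-1)} ≤ i < n_{(k)}`.
-/

open MeasureTheory ProbabilityTheory
open scoped ENNReal
open Finset

namespace ENNReal

noncomputable def expNeg (t : ℝ≥0∞) : ℝ≥0∞ :=
  if t = ∞ then 0 else ENNReal.ofReal (Real.exp (-t.toReal))

@[simp] lemma expNeg_top : expNeg ∞ = 0 := if_pos rfl

@[simp] lemma expNeg_zero : expNeg 0 = 1 := by simp [expNeg]

lemma expNeg_ne_top (t : ℝ≥0∞) : expNeg t ≠ ∞ := by
  unfold expNeg; split_ifs <;> simp

lemma toReal_expNeg (t : ℝ≥0∞) :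
    (expNeg t).toReal = if t = ∞ then 0 else Real.exp (-t.toReal) := by
  unfold expNeg; split_ifs <;> simp [Real.exp_nonneg]

lemma expNeg_add (a b : ℝ≥0∞) : expNeg (a + b) = expNeg a * expNeg b := by
  rcases eq_or_ne a ∞ with rfl | ha
  · simp
  rcases eq_or_ne b ∞ with rfl | hb
  · simp
  simp only [expNeg, add_eq_top, ha, hb, or_self, if_false, toReal_add ha hb, neg_add,
    Real.exp_add, ENNReal.ofReal_mul (Real.exp_nonneg _)]

lemma expNeg_sum {ι : Type*} (s : Finset ι) (f : ι → ℝ≥0∞) :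
    expNeg (∑ i ∈ s, f i) = ∏ i ∈ s, expNeg (f i) :=
  cons_induction (by simp) (fun _ _ _ ih ↦ by rw [sum_cons, prod_cons, expNeg_add, ih]) s

@[fun_prop]
lemma measurable_expNeg : Measurable expNeg :=
  Measurable.ite (measurableSet_singleton ∞) measurable_const (by fun_prop)

end ENNReal

open ENNReal

lemma prod_prod_range_eq_prod_pow_card {M ι : Type*} [CommMonoid M] [Fintype ι]
    (a : ℕ → M) (n : ι → ℕ) {N : ℕ} (hN : ∀ k, n k ≤ N) :
    ∏ k, ∏ i ∈ range (n k), a i = ∏ i ∈ range N, a i ^ #{k | i < n k} := by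
  have hrange k : range (n k) = {i ∈ range N | i < n k} := by
    ext i; simp only [mem_range, mem_filter]; have := hN k; omega
  simp_rw [hrange, prod_filter]
  rw [prod_comm]
  simp_rw [← prod_filter, prod_const]

lemma prod_Ico_card_lt_eq_prod_pow {M : Type*} [CommMonoid M] (f : ℕ → M) {g : ℕ → ℕ}
    (hg : Monotone g) (d j : ℕ) :
    ∏ i ∈ Ico (g 0) (g j), f #{k ∈ range d | i < g (k + 1)} =
      ∏ k ∈ range j, f (d - k) ^ (g (k + 1) - g k) := by
  induction j with
  | zero => simp
  | succ j ih =>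
    have hcount : ∀ i ∈ Ico (g j) (g (j + 1)), #{k ∈ range d | i < g (k + 1)} = d - j := by
      intro i hi
      rw [mem_Ico] at hi
      rw [← Nat.card_Ico j d]
      congr 1
      ext k
      simp only [mem_filter, mem_range, mem_Ico]
      refine ⟨fun ⟨hkd, hik⟩ ↦ ⟨?_, hkd⟩, fun ⟨hjk, hkd⟩ ↦ ⟨hkd, hi.2.trans_le (hg (by omega))⟩⟩
      by_contra! hkj
      exact (hi.1.trans_lt hik).not_ge (hg (by omega))
    rw [← prod_Ico_consecutive _ (hg (Nat.zero_le j)) (hg (Nat.le_add_right j 1)), ih,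
      prod_range_succ, prod_congr rfl fun i hi ↦ congrArg f (hcount i hi), prod_const,
      Nat.card_Ico]

lemma prod_range_card_lt_eq_prod_pow_sub {M : Type*} [CommMonoid M] (f : ℕ → M) (hf : f 0 = 1)
    {d N : ℕ} (n : Fin d → ℕ) (π : Equiv.Perm (Fin d)) (hmono : Monotone fun i ↦ n (π i))
    (hN : ∀ k, n k ≤ N) :
    ∏ i ∈ range N, f #{k | i < n k} =
      ∏ k : Fin d, f (d - k.val) ^ (n (π k) - (if k.val = 0 then 0 else
        n (π ⟨k.val - 1, Nat.lt_of_le_of_lt (Nat.sub_le _ _) k.isLt⟩))) := by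
  -- `g (k + 1) = n (π k)` is the `(k + 1)`-th order statistic, padded by `0` below and `N` above
  set g : ℕ → ℕ := fun j ↦ if j = 0 then 0 else if h : j - 1 < d then n (π ⟨j - 1, h⟩) else N
  have hg : Monotone g := by
    refine monotone_nat_of_le_succ fun j ↦ ?_
    rcases Nat.eq_zero_or_pos j with rfl | hj
    · simp [g]
    by_cases hjd : j < d
    · simpa [g, hj.ne', show j - 1 < d by omega, hjd] using
        hmono (Fin.mk_le_mk.2 (Nat.sub_le j 1) : (⟨j - 1, by omega⟩ : Fin d) ≤ ⟨j, hjd⟩)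
    · simp only [g, hj.ne', Nat.add_sub_cancel, hjd]
      split_ifs <;> simp [hN]
  have hcount (i : ℕ) : #{k | i < n k} = #{k ∈ range d | i < g (k + 1)} := by
    have hperm : #{k | i < n k} = #{k | i < n (π k)} := card_equiv π.symm (by simp)
    rw [hperm, card_filter, card_filter, ← Fin.sum_univ_eq_sum_range]
    simp [g]
  have h0 : g 0 = 0 := by simp [g]
  have hlast : g (d + 1) = N := by simp [g]
  rw [range_eq_Ico, ← h0, ← hlast]
  simp only [hcount]
  rw [prod_Ico_card_lt_eq_prod_pow f hg, prod_range_succ, Nat.sub_self, hf, one_pow, mul_one,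
    ← Fin.prod_univ_eq_prod_range]
  refine prod_congr rfl fun k _ ↦ ?_
  simp [g, show k.val - 1 < d by omega]

lemma Monotone.lt_sInf_iff_lt {α : Type*} [LinearOrder α] {S : ℕ → α} (hS : Monotone S) {e : α}
    (h0 : S 0 < e) (hreach : ∃ m, e ≤ S m) (n : ℕ) :
    n < sInf {m | 1 ≤ m ∧ e ≤ S m} ↔ S n < e := by
  have hne : {m | 1 ≤ m ∧ e ≤ S m}.Nonempty := by
    obtain ⟨m, hm⟩ := hreach
    exact ⟨m, Nat.one_le_iff_ne_zero.2 (by rintro rfl; exact hm.not_gt h0), hm⟩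
  constructor
  · intro hn
    by_contra! hle
    have hn0 : n ≠ 0 := by rintro rfl; exact hle.not_gt h0
    exact (Nat.sInf_le (show n ∈ {m | 1 ≤ m ∧ e ≤ S m} from
      ⟨Nat.one_le_iff_ne_zero.2 hn0, hle⟩)).not_gt hn
  · intro hlt
    by_contra! hle
    exact ((Nat.sInf_mem hne).2.trans (hS hle)).not_gt hlt

namespace ProbabilityTheory

variable {Ω : Type*} [MeasurableSpace Ω] {μ : Measure Ω}

lemma iIndepFun.indepFun_sumElim {ι κ β : Type*} [MeasurableSpace β] {f : ι → Ω → β}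
    {g : κ → Ω → β} (hfm : ∀ i, Measurable (f i)) (hgm : ∀ j, Measurable (g j))
    (h : iIndepFun (Sum.elim f g) μ) :
    IndepFun (fun ω i ↦ f i ω) (fun ω j ↦ g j ω) μ := by
  have hle : ∀ i, MeasurableSpace.comap (Sum.elim f g i) inferInstance ≤ ‹MeasurableSpace Ω› := by
    rintro (i | j)
    · exact (hfm i).comap_le
    · exact (hgm j).comap_le
  have := indep_iSup_of_disjoint hle h.iIndep (Set.isCompl_range_inl_range_inr).disjoint
  rw [iSup_range, iSup_range] at this
  rw [IndepFun_iff_Indep]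
  convert this using 1 <;>
    simp only [MeasurableSpace.pi, MeasurableSpace.comap_iSup, MeasurableSpace.comap_comp,
      Function.comp_def, Sum.elim_inl, Sum.elim_inr]

lemma IndepFun.measure_mem_eq_lintegral [IsFiniteMeasure μ] {α β : Type*} [MeasurableSpace α]
    [MeasurableSpace β] {V : Ω → α} {W : Ω → β} (hVW : IndepFun V W μ) (hV : Measurable V)
    (hW : Measurable W) {D : Set (α × β)} (hD : MeasurableSet D) :
    μ {ω | (V ω, W ω) ∈ D} = ∫⁻ ω, μ {ω' | (V ω, W ω') ∈ D} ∂μ := by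
  change μ ((fun ω ↦ (V ω, W ω)) ⁻¹' D) = _
  rw [← Measure.map_apply (hV.prodMk hW) hD,
    (indepFun_iff_map_prod_eq_prod_map_map hV.aemeasurable hW.aemeasurable).1 hVW,
    Measure.prod_apply hD, lintegral_map (measurable_measure_prodMk_left hD) hV]
  exact lintegral_congr fun ω ↦ Measure.map_apply hW (measurable_prodMk_left hD)

end ProbabilityTheory

section

variable {Ω : Type*} [MeasurableSpace Ω] {μ : Measure Ω}

lemma measure_lt_eq_expNeg {E : Ω → ℝ≥0∞}
    (hE : ∀ t : ℝ, 0 ≤ t → μ {ω | ENNReal.ofReal t < E ω} = ENNReal.ofReal (Real.exp (-t)))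
    (t : ℝ≥0∞) : μ {ω | t < E ω} = expNeg t := by
  rcases eq_or_ne t ∞ with rfl | ht
  · simp
  · simpa [expNeg, ht, ofReal_toReal ht] using hE t.toReal toReal_nonneg

lemma ae_pos_of_measure_lt_eq_expNeg [IsProbabilityMeasure μ] {E : Ω → ℝ≥0∞}
    (hEm : Measurable E) (hE : ∀ t, μ {ω | t < E ω} = expNeg t) : ∀ᵐ ω ∂μ, 0 < E ω :=
  (ae_iff_measure_eq (measurableSet_lt measurable_const hEm).nullMeasurableSet).2 (by simp [hE])

lemma ae_ne_top_of_measure_lt_eq_expNeg {E : Ω → ℝ≥0∞} (hE : ∀ t, μ {ω | t < E ω} = expNeg t) :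
    ∀ᵐ ω ∂μ, E ω ≠ ∞ := by
  have hle (n : ℕ) : μ {ω | E ω = ∞} ≤ expNeg n :=
    (measure_mono fun ω (hω : E ω = ∞) ↦ by simp [hω]).trans_eq (hE n)
  have hlim : Filter.Tendsto (fun n : ℕ ↦ expNeg n) Filter.atTop (nhds 0) := by
    simpa [expNeg] using ENNReal.tendsto_ofReal
      (Real.tendsto_exp_neg_atTop_nhds_zero.comp tendsto_natCast_atTop_atTop)
  simpa [Filter.EventuallyLE, ae_iff] using ge_of_tendsto' hlim hle

lemma integral_toReal_expNeg_pow {f : Ω → ℝ≥0∞} (hf : Measurable f) (c : ℕ) :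
    ∫ ω, (expNeg (f ω)).toReal ^ c ∂μ = (∫⁻ ω, expNeg (f ω) ^ c ∂μ).toReal := by
  simp_rw [← ENNReal.toReal_pow]
  exact integral_toReal (by fun_prop) (ae_of_all _ fun ω ↦ (pow_ne_top (expNeg_ne_top _)).lt_top)

lemma lintegral_prod_comp_eq_prod_lintegral {α : Type*} [MeasurableSpace α] {X : ℕ → Ω → α}
    (hXm : ∀ i, Measurable (X i)) (hind : iIndepFun X μ) (hident : ∀ i, μ.map (X i) = μ.map (X 0))
    {g : ℕ → α → ℝ≥0∞} (hg : ∀ i, Measurable (g i)) (s : Finset ℕ) :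
    ∫⁻ ω, ∏ i ∈ s, g i (X i ω) ∂μ = ∏ i ∈ s, ∫⁻ ω, g i (X 0 ω) ∂μ := by
  refine (lintegral_prod_eq_prod_lintegral_of_indepFun s _ (hind.comp g hg)
    fun i ↦ (hg i).comp (hXm i)).trans ?_
  exact prod_congr rfl fun i _ ↦
    (IdentDistrib.comp ⟨(hXm i).aemeasurable, (hXm 0).aemeasurable, hident i⟩ (hg i)).lintegral_eq

lemma measure_forall_lt_eq_lintegral_prod_expNeg {ι : Type*} [Fintype ι]
    {V : Ω → ι → ℝ≥0∞} {E : ι → Ω → ℝ≥0∞} (hV : Measurable V) (hEm : ∀ k, Measurable (E k))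
    (hVE : IndepFun V (fun ω k ↦ E k ω) μ) (hEind : iIndepFun E μ)
    (hE : ∀ k t, μ {ω | t < E k ω} = expNeg t) :
    μ {ω | ∀ k, V ω k < E k ω} = ∫⁻ ω, ∏ k, expNeg (V ω k) ∂μ := by
  have := hEind.isProbabilityMeasure
  have hD : MeasurableSet {p : (ι → ℝ≥0∞) × (ι → ℝ≥0∞) | ∀ k, p.1 k < p.2 k} := by
    simp only [Set.ofPred_forall]
    exact .iInter fun k ↦ measurableSet_lt (by fun_prop) (by fun_prop)
  refine (hVE.measure_mem_eq_lintegral hV (measurable_pi_lambda _ hEm) hD).trans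
    (lintegral_congr fun ω ↦ ?_)
  have hset : {ω' | ∀ k, V ω k < E k ω'} = ⋂ k ∈ univ, E k ⁻¹' Set.Ioi (V ω k) := by
    ext; simp
  simp only [Set.mem_ofPred_eq]
  rw [hset, hEind.measure_inter_preimage_eq_mul _ fun _ _ ↦ measurableSet_Ioi]
  exact prod_congr rfl fun k _ ↦ hE k _

lemma measure_forall_sum_lt_eq_lintegral {ι : Type*} [Fintype ι] {X : ℕ → Ω → ℝ≥0∞}
    {E : ι → Ω → ℝ≥0∞} (hXm : ∀ i, Measurable (X i)) (hEm : ∀ k, Measurable (E k))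
    (hind : iIndepFun (Sum.elim X E) μ)
    (hE : ∀ k t, μ {ω | t < E k ω} = expNeg t) (n : ι → ℕ) :
    μ {ω | ∀ k, ∑ i ∈ range (n k), X i ω < E k ω} =
      ∫⁻ ω, ∏ k, expNeg (∑ i ∈ range (n k), X i ω) ∂μ := by
  have hφ : Measurable fun (x : ℕ → ℝ≥0∞) (k : ι) ↦ ∑ i ∈ range (n k), x i := by fun_prop
  exact measure_forall_lt_eq_lintegral_prod_expNeg (hφ.comp (measurable_pi_lambda _ hXm)) hEm
    ((hind.indepFun_sumElim hXm hEm).comp hφ measurable_id)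
    (hind.precomp (g := Sum.inr) Sum.inr_injective) hE

lemma exists_measure_le_ne_zero {f : Ω → ℝ≥0∞} (h : μ {ω | f ω ≠ 0} ≠ 0) :
    ∃ ε ≠ 0, μ {ω | ε ≤ f ω} ≠ 0 := by
  have hsub : {ω | f ω ≠ 0} ⊆ ⋃ n : ℕ, {ω | (n : ℝ≥0∞)⁻¹ ≤ f ω} := fun ω hω ↦
    Set.mem_iUnion.2 ((ENNReal.exists_inv_nat_lt hω).imp fun _ ↦ le_of_lt)
  obtain ⟨n, hn⟩ := exists_measure_pos_of_not_measure_iUnion_null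
    fun h0 ↦ h (measure_mono_null hsub h0)
  exact ⟨_, by simp, hn.ne'⟩

open Filter in
lemma ae_tsum_eq_top_of_iIndepFun {X : ℕ → Ω → ℝ≥0∞} (hXm : ∀ i, Measurable (X i))
    (hind : iIndepFun X μ) (hident : ∀ i, μ.map (X i) = μ.map (X 0))
    (hX0 : μ {ω | X 0 ω = 0} < 1) : ∀ᵐ ω ∂μ, ∑' i, X i ω = ∞ := by
  have := hind.isProbabilityMeasure
  have hX0' : μ {ω | X 0 ω = 0}ᶜ ≠ 0 := by
    rw [prob_compl_eq_one_sub (s := {ω | X 0 ω = 0}) (hXm 0 (measurableSet_singleton 0))]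
    exact (tsub_pos_of_lt hX0).ne'
  obtain ⟨ε, hε, hpos⟩ := exists_measure_le_ne_zero hX0'
  set A : ℕ → Set Ω := fun i ↦ X i ⁻¹' Set.Ici ε
  have hAm i : MeasurableSet (A i) := hXm i measurableSet_Ici
  have hAind : iIndepSet A μ := (iIndepSet_iff_meas_biInter hAm).2 fun s ↦
    hind.measure_inter_preimage_eq_mul s fun _ _ ↦ measurableSet_Ici
  have hAμ i : μ (A i) = μ (A 0) := by
    rw [← Measure.map_apply (hXm i) measurableSet_Ici, hident,
      Measure.map_apply (hXm 0) measurableSet_Ici]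
  have hlimsup : ∀ᵐ ω ∂μ, ω ∈ limsup A atTop := by
    rw [ae_mem_iff_measure_eq (MeasurableSet.measurableSet_limsup hAm).nullMeasurableSet,
      measure_univ]
    exact measure_limsup_eq_one hAm hAind (by
      simp_rw [hAμ]; exact ENNReal.tsum_const_eq_top_of_ne_zero hpos)
  filter_upwards [hlimsup] with ω hω
  have : Infinite {i | ε ≤ X i ω} :=
    (Nat.frequently_atTop_iff_infinite.1 (mem_limsup_iff_frequently_mem.1 hω)).to_subtype
  refine top_le_iff.1 ?_
  calc ∞ = ∑' _ : {i | ε ≤ X i ω}, ε := (ENNReal.tsum_const_eq_top_of_ne_zero hε).symm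
    _ ≤ ∑' i : {i | ε ≤ X i ω}, X i ω := ENNReal.tsum_le_tsum fun i ↦ i.2
    _ ≤ ∑' i, X i ω := ENNReal.tsum_comp_le_tsum_of_injective Subtype.val_injective _

lemma ae_lt_sInf_iff [IsProbabilityMeasure μ] {ι : Type*} [Countable ι] {X : ℕ → Ω → ℝ≥0∞}
    {E : ι → Ω → ℝ≥0∞} (hEm : ∀ k, Measurable (E k)) (hE : ∀ k t, μ {ω | t < E k ω} = expNeg t)
    (hsum : ∀ᵐ ω ∂μ, ∑' i, X i ω = ∞) :
    ∀ᵐ ω ∂μ, ∀ k m, m < sInf {m | 1 ≤ m ∧ E k ω ≤ ∑ i ∈ range m, X i ω} ↔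
      ∑ i ∈ range m, X i ω < E k ω := by
  have hpos k := ae_pos_of_measure_lt_eq_expNeg (hEm k) (hE k)
  have hfin k := ae_ne_top_of_measure_lt_eq_expNeg (hE k)
  filter_upwards [hsum, ae_all_iff.2 hpos, ae_all_iff.2 hfin] with ω hsum hpos hfin k m
  refine ((sum_mono_set _).comp range_mono).lt_sInf_iff_lt (by simpa using hpos k) ?_ m
  rw [ENNReal.tsum_eq_iSup_nat] at hsum
  obtain ⟨m, hm⟩ := lt_iSup_iff.1 (hsum ▸ (hfin k).lt_top)
  exact ⟨m, hm.le⟩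

end

/-- Conditionally i.i.d. construction of the extendible wide-sense geometric law:
for an i.i.d. sequence of `[0,∞]`-valued increments `X`, an independent i.i.d.
sequence of unit exponential variables `E`, and first-passage times
`τ_k = min {n ≥ 1 : X₁ + ⋯ + X_n ≥ E_k}`, the joint survival function of
`(τ₁,…,τ_d)` is `∏_{k=1}^d β_k^{n_{(d-k+1)} - n_{(d-k)}}` with `β_k = E[e^{-k X₁}]`. -/
theorem random_walk_model_survival
    {Ω : Type*} [MeasurableSpace Ω] (μ : Measure Ω) [IsProbabilityMeasure μ]
    (X : ℕ → Ω → ℝ≥0∞) (E : ℕ → Ω → ℝ≥0∞)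
    (hXmeas : ∀ i, Measurable (X i)) (hEmeas : ∀ k, Measurable (E k))
    (hindep : iIndepFun (m := fun _ : ℕ ⊕ ℕ => (inferInstance : MeasurableSpace ℝ≥0∞))
      (Sum.elim X E) μ)
    (hXid : ∀ i : ℕ, Measure.map (X i) μ = Measure.map (X 0) μ)
    (hExp : ∀ (k : ℕ) (t : ℝ), 0 ≤ t →
      μ {ω | ENNReal.ofReal t < E k ω} = ENNReal.ofReal (Real.exp (-t)))
    (hX0 : μ {ω | X 0 ω = 0} < 1)
    (τ : ℕ → Ω → ℕ)
    (hτ : ∀ (k : ℕ) (ω : Ω), τ k ω =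
      sInf {n : ℕ | 1 ≤ n ∧ E k ω ≤ ∑ i ∈ Finset.range n, X i ω})
    (h : ℝ≥0∞ → ℝ)
    (hh : ∀ x : ℝ≥0∞, h x = if x = ∞ then 0 else Real.exp (-x.toReal))
    (β : ℕ → ℝ) (hβ : ∀ k : ℕ, β k = ∫ ω, (h (X 0 ω)) ^ k ∂μ) :
    ∀ (d : ℕ), 2 ≤ d → ∀ (n : Fin d → ℕ) (π : Equiv.Perm (Fin d)),
      Monotone (fun i => n (π i)) →
      (μ {ω | ∀ k : Fin d, n k < τ k.val ω}).toReal =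
        ∏ k : Fin d,
          β (d - k.val) ^
            (n (π k) - (if k.val = 0 then 0 else
              n (π ⟨k.val - 1, Nat.lt_of_le_of_lt (Nat.sub_le _ _) k.isLt⟩))) := by
  intro d _ n π hmono
  have hN k : n k ≤ univ.sup n := le_sup (mem_univ k)
  have hXind : iIndepFun X μ := hindep.precomp (g := Sum.inl) Sum.inl_injective
  have hXind' : iIndepFun (Sum.elim X fun k : Fin d ↦ E k) μ := by
    convert hindep.precomp (g := Sum.map id (Fin.val (n := d)))
      (Sum.map_injective.2 ⟨Function.injective_id, Fin.val_injective⟩) using 1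
    ext (i | k) <;> rfl
  have hEsurv k := measure_lt_eq_expNeg (hExp k)
  have hevent : {ω | ∀ k : Fin d, n k < τ k ω} =ᵐ[μ]
      {ω | ∀ k : Fin d, ∑ i ∈ range (n k), X i ω < E k ω} := by
    rw [Filter.eventuallyEq_set]
    filter_upwards [ae_lt_sInf_iff (fun k : Fin d ↦ hEmeas k) (fun k ↦ hEsurv k)
      (ae_tsum_eq_top_of_iIndepFun hXmeas hXind hXid hX0)] with ω hω
    simp only [hτ, hω]
  obtain rfl : h = fun x ↦ (expNeg x).toReal := funext fun x ↦ (hh x).trans (toReal_expNeg x).symm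
  simp_rw [integral_toReal_expNeg_pow (hXmeas 0)] at hβ
  rw [measure_congr hevent, measure_forall_sum_lt_eq_lintegral (E := fun k : Fin d ↦ E k) hXmeas
    (fun k ↦ hEmeas k) hXind' (fun k ↦ hEsurv k) n]
  simp_rw [expNeg_sum, prod_prod_range_eq_prod_pow_card _ n hN]
  rw [lintegral_prod_comp_eq_prod_lintegral hXmeas hXind hXid
    (fun _ ↦ measurable_expNeg.pow_const _), toReal_prod]
  simp_rw [← hβ]
  exact prod_range_card_lt_eq_prod_pow_sub β (by simp [hβ]) n π hmono hN
end

section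
/- Let (τ₁, τ₂) have the exchangeable bivariate wide-sense geometric survival function P(τ₁ > n₁, τ₂ > n₂) = β₂^{min(n₁,n₂)} β₁^{max(n₁,n₂)−min(n₁,n₂)} with 0 < β₁ < 1, 0 ≤ β₂ ≤ β₁, and 1 − 2β₁ + β₂ ≥ 0. Then Corr[τ₁, τ₂] = (β₂ − β₁²) / (β₁(1 − β₂)). -/
/-!
For ℕ-valued random variables, `E[X] = ∑ₙ P(X > n)` and `E[XY] = ∑_{m,n} P(X > m, Y > n)`.
Taking `n₁ = n₂ = 0` in the survival function shows `τ₁, τ₂ ≥ 1` almost surely, so the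
marginal tails are `P(τᵢ > n) = β₁ⁿ` and `E[τᵢ] = 1/(1-β₁)`. Splitting `ℕ × ℕ` along the diagonal turns
`∑ β₂^min β₁^(max-min)` into a product of geometric series, `E[τ₁τ₂] = (1+β₁)/((1-β₂)(1-β₁))`;
the case `β₂ = β₁` gives `E[τᵢ²]`, and the correlation is then algebra.
-/

open MeasureTheory Set Function

open scoped ENNReal

namespace ENNReal

theorem tsum_prod_comp_min_max_sub (g : ℕ → ℕ → ℝ≥0∞) :
    ∑' p : ℕ × ℕ, g (min p.1 p.2) (max p.1 p.2 - min p.1 p.2) =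
      ∑' p : ℕ × ℕ, g p.1 p.2 + ∑' p : ℕ × ℕ, g p.1 (p.2 + 1) := by
  -- pairs on or below the diagonal are `(k + d, k)`, pairs above it are `(k, k + d + 1)`
  set lower : ℕ × ℕ → ℕ × ℕ := fun q => (q.1 + q.2, q.1)
  set upper : ℕ × ℕ → ℕ × ℕ := fun q => (q.1, q.1 + q.2 + 1)
  have hlower : Injective lower := fun q q' h => by
    simp only [lower, Prod.mk.injEq] at h; ext <;> omega
  have hupper : Injective upper := fun q q' h => by
    simp only [upper, Prod.mk.injEq] at h; ext <;> omega
  have hcompl : (range lower)ᶜ = range upper := by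
    ext ⟨i, j⟩
    simp only [mem_compl_iff, mem_range, lower, upper, Prod.mk.injEq, not_exists, not_and]
    constructor
    · intro h
      refine ⟨(i, j - i - 1), rfl, ?_⟩
      have : ¬ j ≤ i := fun hji => h (j, i - j) (by omega) rfl
      omega
    · rintro ⟨q, rfl, rfl⟩ q' h
      omega
  rw [← ENNReal.summable.tsum_add_tsum_compl (s := range lower) ENNReal.summable, hcompl,
    tsum_range (fun p : ℕ × ℕ => g (min p.1 p.2) (max p.1 p.2 - min p.1 p.2)) hlower,
    tsum_range (fun p : ℕ × ℕ => g (min p.1 p.2) (max p.1 p.2 - min p.1 p.2)) hupper]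
  congr 1 <;> refine tsum_congr fun q => ?_ <;> simp only [lower, upper] <;> congr 1 <;> omega

theorem tsum_pow_min_mul_pow_max_sub (b c : ℝ≥0∞) :
    ∑' p : ℕ × ℕ, c ^ min p.1 p.2 * b ^ (max p.1 p.2 - min p.1 p.2) =
      (1 - c)⁻¹ * (1 - b)⁻¹ * (1 + b) := by
  rw [tsum_prod_comp_min_max_sub (fun k d => c ^ k * b ^ d), ENNReal.tsum_prod',
    ENNReal.tsum_prod']
  simp_rw [ENNReal.tsum_mul_left, ENNReal.tsum_geometric, ENNReal.tsum_geometric_add_one,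
    ENNReal.tsum_mul_right, ENNReal.tsum_geometric]
  ring

theorem inv_one_sub_ofReal {b : ℝ} (hb0 : 0 ≤ b) (hb1 : b < 1) :
    (1 - ENNReal.ofReal b)⁻¹ = ENNReal.ofReal (1 - b)⁻¹ := by
  rw [← ENNReal.ofReal_one, ← ENNReal.ofReal_sub _ hb0, ENNReal.ofReal_inv_of_pos (by linarith)]

theorem natCast_eq_tsum_ite_lt (m : ℕ) : (m : ℝ≥0∞) = ∑' n : ℕ, if n < m then 1 else 0 := by
  rw [tsum_eq_sum (s := Finset.range m) (fun n hn => if_neg (by simpa using hn)),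
    Finset.sum_ite_of_true fun n hn => Finset.mem_range.1 hn]
  simp

theorem natCast_mul_natCast_eq_tsum_ite_lt (m n : ℕ) :
    (m : ℝ≥0∞) * n = ∑' p : ℕ × ℕ, if p.1 < m ∧ p.2 < n then 1 else 0 := by
  rw [natCast_eq_tsum_ite_lt m, natCast_eq_tsum_ite_lt n, ENNReal.tsum_prod',
    ← ENNReal.tsum_mul_right]
  simp_rw [← ENNReal.tsum_mul_left, ite_zero_mul_ite_zero, mul_one]

end ENNReal

def wideGeometricSurvival (β₁ β₂ : ℝ) (m n : ℕ) : ℝ :=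
  β₂ ^ min m n * β₁ ^ (max m n - min m n)

theorem wideGeometricSurvival_comm (β₁ β₂ : ℝ) (m n : ℕ) :
    wideGeometricSurvival β₁ β₂ m n = wideGeometricSurvival β₁ β₂ n m := by
  rw [wideGeometricSurvival, wideGeometricSurvival, min_comm, max_comm]

theorem wideGeometricSurvival_self (β : ℝ) (m n : ℕ) :
    wideGeometricSurvival β β m n = β ^ max m n := by
  rw [wideGeometricSurvival, ← pow_add, Nat.add_sub_cancel' min_le_max]

section NatValued

variable {Ω : Type*} [MeasurableSpace Ω] {μ : Measure Ω}

theorem lintegral_natCast_eq_tsum_measure_lt {X : Ω → ℕ} (hX : Measurable X) :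
    ∫⁻ ω, (X ω : ℝ≥0∞) ∂μ = ∑' n : ℕ, μ {ω | n < X ω} := by
  have hmeas (n : ℕ) : MeasurableSet {ω | n < X ω} := hX measurableSet_Ioi
  simp_rw [ENNReal.natCast_eq_tsum_ite_lt (X _), ← lintegral_indicator_one (hmeas _)]
  rw [← lintegral_tsum fun n => (measurable_one.indicator (hmeas n)).aemeasurable]
  simp only [indicator_apply, mem_ofPred_eq, Pi.one_apply]

theorem lintegral_natCast_mul_eq_tsum_measure_lt {X Y : Ω → ℕ} (hX : Measurable X)
    (hY : Measurable Y) :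
    ∫⁻ ω, (X ω : ℝ≥0∞) * Y ω ∂μ = ∑' p : ℕ × ℕ, μ {ω | p.1 < X ω ∧ p.2 < Y ω} := by
  have hmeas (p : ℕ × ℕ) : MeasurableSet {ω | p.1 < X ω ∧ p.2 < Y ω} :=
    (hX measurableSet_Ioi).inter (hY measurableSet_Ioi)
  simp_rw [ENNReal.natCast_mul_natCast_eq_tsum_ite_lt, ← lintegral_indicator_one (hmeas _)]
  rw [← lintegral_tsum fun p => (measurable_one.indicator (hmeas p)).aemeasurable]
  simp only [indicator_apply, mem_ofPred_eq, Pi.one_apply]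

theorem integral_natCast_eq_toReal_lintegral {X : Ω → ℕ} (hX : Measurable X) :
    ∫ ω, (X ω : ℝ) ∂μ = (∫⁻ ω, (X ω : ℝ≥0∞) ∂μ).toReal := by
  simpa using integral_toReal (measurable_from_top.comp hX).aemeasurable
    (.of_forall fun ω => ENNReal.natCast_lt_top (X ω))

theorem integral_natCast_of_measure_lt_eq_pow {X : Ω → ℕ} (hX : Measurable X) {β : ℝ}
    (hβ0 : 0 ≤ β) (hβ1 : β < 1) (h : ∀ n : ℕ, μ {ω | n < X ω} = ENNReal.ofReal (β ^ n)) :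
    ∫ ω, (X ω : ℝ) ∂μ = (1 - β)⁻¹ := by
  simp_rw [integral_natCast_eq_toReal_lintegral hX, lintegral_natCast_eq_tsum_measure_lt hX, h,
    ENNReal.ofReal_pow hβ0, ENNReal.tsum_geometric, ENNReal.inv_one_sub_ofReal hβ0 hβ1]
  exact ENNReal.toReal_ofReal (inv_nonneg.2 (by linarith))

theorem integral_natCast_mul_of_wideGeometricSurvival {X Y : Ω → ℕ} (hX : Measurable X)
    (hY : Measurable Y) {β₁ β₂ : ℝ} (hβ₁0 : 0 ≤ β₁) (hβ₁1 : β₁ < 1) (hβ₂0 : 0 ≤ β₂)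
    (hβ₂1 : β₂ < 1) (h : ∀ m n : ℕ, μ {ω | m < X ω ∧ n < Y ω} =
      ENNReal.ofReal (wideGeometricSurvival β₁ β₂ m n)) :
    ∫ ω, (X ω : ℝ) * Y ω ∂μ = (1 - β₂)⁻¹ * (1 - β₁)⁻¹ * (1 + β₁) := by
  have hprod : ∀ ω, (X ω : ℝ) * Y ω = ((X * Y) ω : ℕ) := fun ω => by simp
  simp_rw [hprod, integral_natCast_eq_toReal_lintegral (hX.mul hY), Pi.mul_apply, Nat.cast_mul,
    lintegral_natCast_mul_eq_tsum_measure_lt hX hY, h, wideGeometricSurvival,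
    ENNReal.ofReal_mul (pow_nonneg hβ₂0 _), ENNReal.ofReal_pow hβ₁0, ENNReal.ofReal_pow hβ₂0,
    ENNReal.tsum_pow_min_mul_pow_max_sub, ENNReal.inv_one_sub_ofReal hβ₁0 hβ₁1,
    ENNReal.inv_one_sub_ofReal hβ₂0 hβ₂1]
  have hβ₁ : 0 ≤ (1 - β₁)⁻¹ := inv_nonneg.2 (by linarith)
  have hβ₂ : 0 ≤ (1 - β₂)⁻¹ := inv_nonneg.2 (by linarith)
  rw [← ENNReal.ofReal_one, ← ENNReal.ofReal_add zero_le_one hβ₁0, ← ENNReal.ofReal_mul hβ₂,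
    ← ENNReal.ofReal_mul (mul_nonneg hβ₂ hβ₁), ENNReal.toReal_ofReal (by positivity)]

theorem integral_natCast_sq_of_measure_lt_eq_pow {X : Ω → ℕ} (hX : Measurable X) {β : ℝ}
    (hβ0 : 0 ≤ β) (hβ1 : β < 1) (h : ∀ n : ℕ, μ {ω | n < X ω} = ENNReal.ofReal (β ^ n)) :
    ∫ ω, (X ω : ℝ) ^ 2 ∂μ = (1 - β)⁻¹ * (1 - β)⁻¹ * (1 + β) := by
  simp_rw [sq]
  refine integral_natCast_mul_of_wideGeometricSurvival hX hX hβ0 hβ1 hβ0 hβ1 fun m n => ?_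
  have hset : {ω | m < X ω ∧ n < X ω} = {ω | max m n < X ω} := by simp
  rw [hset, h, wideGeometricSurvival_self]

theorem measure_lt_eq_pow_of_wideGeometricSurvival [IsProbabilityMeasure μ] {X Y : Ω → ℕ}
    (hY : Measurable Y) {β₁ β₂ : ℝ} (h : ∀ m n : ℕ, μ {ω | m < X ω ∧ n < Y ω} =
      ENNReal.ofReal (wideGeometricSurvival β₁ β₂ m n)) (n : ℕ) :
    μ {ω | n < X ω} = ENNReal.ofReal (β₁ ^ n) := by
  have hXY_pos : μ {ω | 0 < X ω ∧ 0 < Y ω} = 1 := by simp [h, wideGeometricSurvival]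
  have hY_pos : μ {ω | 0 < Y ω} = 1 :=
    le_antisymm prob_le_one (hXY_pos ▸ measure_mono fun ω hω => hω.2)
  calc μ {ω | n < X ω} = μ ({ω | n < X ω} ∩ {ω | 0 < Y ω}) :=
        (measure_inter_conull ((prob_compl_eq_zero_iff (hY measurableSet_Ioi)).2 hY_pos)).symm
    _ = ENNReal.ofReal (β₁ ^ n) := by simp [← ofPred_and, h, wideGeometricSurvival]

end NatValued

theorem exchangeable_bivariate_wide_geometric_correlation_general
    {Ω : Type*} [MeasurableSpace Ω] (μ : Measure Ω) [IsProbabilityMeasure μ]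
    (τ₁ τ₂ : Ω → ℕ) (hmeas₁ : Measurable τ₁) (hmeas₂ : Measurable τ₂)
    (β₁ β₂ : ℝ) (hβ₁ : 0 < β₁) (hβ₁' : β₁ < 1)
    (hβ₂0 : 0 ≤ β₂) (hβ₂1 : β₂ ≤ β₁)
    (hsurv : ∀ n₁ n₂ : ℕ, μ {ω | n₁ < τ₁ ω ∧ n₂ < τ₂ ω} =
      ENNReal.ofReal (β₂ ^ min n₁ n₂ * β₁ ^ (max n₁ n₂ - min n₁ n₂))) :
    (∫ ω, (τ₁ ω : ℝ) * (τ₂ ω : ℝ) ∂μ -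
        (∫ ω, (τ₁ ω : ℝ) ∂μ) * (∫ ω, (τ₂ ω : ℝ) ∂μ)) /
      (Real.sqrt (∫ ω, (τ₁ ω : ℝ) ^ 2 ∂μ - (∫ ω, (τ₁ ω : ℝ) ∂μ) ^ 2) *
        Real.sqrt (∫ ω, (τ₂ ω : ℝ) ^ 2 ∂μ - (∫ ω, (τ₂ ω : ℝ) ∂μ) ^ 2)) =
      (β₂ - β₁ ^ 2) / (β₁ * (1 - β₂)) := by
  have hβ₂1' : β₂ < 1 := hβ₂1.trans_lt hβ₁'
  have hsurv_swap : ∀ m n : ℕ, μ {ω | m < τ₂ ω ∧ n < τ₁ ω} =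
      ENNReal.ofReal (wideGeometricSurvival β₁ β₂ m n) := fun m n => by
    rw [wideGeometricSurvival_comm]
    simpa only [and_comm, wideGeometricSurvival] using hsurv n m
  have htail₁ := measure_lt_eq_pow_of_wideGeometricSurvival hmeas₂ hsurv
  have htail₂ := measure_lt_eq_pow_of_wideGeometricSurvival hmeas₁ hsurv_swap
  rw [integral_natCast_of_measure_lt_eq_pow hmeas₁ hβ₁.le hβ₁' htail₁,
    integral_natCast_of_measure_lt_eq_pow hmeas₂ hβ₁.le hβ₁' htail₂,
    integral_natCast_sq_of_measure_lt_eq_pow hmeas₁ hβ₁.le hβ₁' htail₁,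
    integral_natCast_sq_of_measure_lt_eq_pow hmeas₂ hβ₁.le hβ₁' htail₂,
    integral_natCast_mul_of_wideGeometricSurvival hmeas₁ hmeas₂ hβ₁.le hβ₁' hβ₂0 hβ₂1' hsurv]
  have h1β₁ : 1 - β₁ ≠ 0 := by linarith
  have h1β₂ : 1 - β₂ ≠ 0 := by linarith
  have hvar : (1 - β₁)⁻¹ * (1 - β₁)⁻¹ * (1 + β₁) - ((1 - β₁)⁻¹) ^ 2 = β₁ / (1 - β₁) ^ 2 := by
    field_simp
    ring
  rw [hvar, Real.mul_self_sqrt (by positivity)]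
  field_simp
  ring

/-- Correlation of the exchangeable bivariate wide-sense geometric distribution:
if `P(τ₁ > n₁, τ₂ > n₂) = β₂^{min(n₁,n₂)} β₁^{max(n₁,n₂)-min(n₁,n₂)}`, then
`Corr[τ₁,τ₂] = (β₂ - β₁²)/(β₁(1 - β₂))`. -/
theorem exchangeable_bivariate_wide_geometric_correlation
    {Ω : Type*} [MeasurableSpace Ω] (μ : Measure Ω) [IsProbabilityMeasure μ]
    (τ₁ τ₂ : Ω → ℕ) (hmeas₁ : Measurable τ₁) (hmeas₂ : Measurable τ₂)
    (β₁ β₂ : ℝ) (hβ₁ : 0 < β₁) (hβ₁' : β₁ < 1)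
    (hβ₂0 : 0 ≤ β₂) (hβ₂1 : β₂ ≤ β₁) (hmon : 0 ≤ 1 - 2 * β₁ + β₂)
    (hsurv : ∀ n₁ n₂ : ℕ, μ {ω | n₁ < τ₁ ω ∧ n₂ < τ₂ ω} =
      ENNReal.ofReal (β₂ ^ min n₁ n₂ * β₁ ^ (max n₁ n₂ - min n₁ n₂))) :
    (∫ ω, (τ₁ ω : ℝ) * (τ₂ ω : ℝ) ∂μ -
        (∫ ω, (τ₁ ω : ℝ) ∂μ) * (∫ ω, (τ₂ ω : ℝ) ∂μ)) /
      (Real.sqrt (∫ ω, (τ₁ ω : ℝ) ^ 2 ∂μ - (∫ ω, (τ₁ ω : ℝ) ∂μ) ^ 2) *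
        Real.sqrt (∫ ω, (τ₂ ω : ℝ) ^ 2 ∂μ - (∫ ω, (τ₂ ω : ℝ) ∂μ) ^ 2)) =
      (β₂ - β₁ ^ 2) / (β₁ * (1 - β₂)) :=
  exchangeable_bivariate_wide_geometric_correlation_general μ τ₁ τ₂ hmeas₁ hmeas₂ β₁ β₂ hβ₁ hβ₁'
    hβ₂0 hβ₂1 hsurv
end

section
/- For any d ≥ 2 and any (1, β₁, ..., β_d) that is a (d+1)-monotone sequence with β₁ ≠ 0, the quantity (β₂ − β₁²)/(β₁(1 − β₂)) is bounded below by −1/d, and the bound is attained at (β₀,...,β_d) = (1, 1/d, 0, ..., 0). -/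
/-!
Put `c_j = ∇ʲβ_{d-j} = (-1)ʲ Δʲβ_{d-j} ≥ 0`. The backward Newton formula gives
`β_k = ∑ⱼ C(d-k, j) c_j`, so the weights `C(d, j) c_j` are a probability distribution of
`N = d - j` with `E N = d β₁` and `E N(N-1) = d(d-1) β₂`. Nonnegativity of the variance of `N` reads
`d β₁² ≤ (d-1) β₂ + β₁`, which together with `0 ≤ β₂ ≤ β₁ ≤ 1` gives the bound. At
`(1, 1/d, 0, …, 0)` the variable `N` is constant and the bound is attained.
-/

open Finset fwdDiff fwdDiff_aux

theorem Nat.cast_choose_mul_sub_eq (n j : ℕ) :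
    (n.choose j : ℝ) * (n - j) = n * (n - 1).choose j := by
  rcases n with _ | n
  · rcases j with _ | j <;> simp
  rcases le_or_gt j (n + 1) with hj | hj
  · have h : ((n.choose j * (n + 1) : ℕ) : ℝ) = ((n + 1).choose j * (n + 1 - j) : ℕ) :=
      congrArg _ (Nat.choose_mul_succ_eq n j)
    push_cast [Nat.cast_sub hj] at h
    rw [Nat.add_sub_cancel]
    push_cast
    linarith
  · simp [Nat.choose_eq_zero_of_lt hj, Nat.choose_eq_zero_of_lt (Nat.lt_of_succ_lt hj)]

theorem sum_mul_sub_sq_eq (s : Finset ℕ) (w a : ℕ → ℝ) (t : ℝ) :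
    ∑ j ∈ s, w j * (a j - t) ^ 2 =
      ∑ j ∈ s, w j * (a j * (a j - 1)) + (1 - 2 * t) * ∑ j ∈ s, w j * a j
        + t ^ 2 * ∑ j ∈ s, w j := by
  simp only [mul_sum, ← sum_add_distrib]
  exact sum_congr rfl fun j _ => by ring

section

variable (x : ℕ → ℝ)

theorem sum_neg_one_pow_mul_choose_mul_eq_fwdDiff_iter (j k : ℕ) :
    ∑ i ∈ range (j + 1), (-1 : ℝ) ^ i * j.choose i * x (k + i) = (-1) ^ j * Δ_[1] ^[j] x k := by
  rw [fwdDiff_iter_eq_sum_shift, mul_sum]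
  refine sum_congr rfl fun i hi => ?_
  obtain ⟨m, rfl⟩ := Nat.exists_eq_add_of_le (mem_range_succ_iff.mp hi)
  have hm : (-1 : ℝ) ^ m * (-1) ^ m = 1 := by rw [← mul_pow]; norm_num
  rw [zsmul_eq_mul, smul_eq_mul, mul_one, Nat.add_sub_cancel_left]
  push_cast
  linear_combination (-(-1) ^ i * ((i + m).choose i : ℝ) * x (k + i)) * hm

/-- Backward Newton formula: `-Δ + E = 1` for the shift `E`, and `(-Δ + E)ⁿ` is expanded
binomially. -/
theorem eq_sum_choose_mul_neg_one_pow_mul_fwdDiff_iter (n k : ℕ) :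
    x k = ∑ j ∈ range (n + 1), n.choose j * ((-1) ^ j * Δ_[1] ^[j] x (k + (n - j))) := by
  have hcomm : Commute (-fwdDiffₗ ℕ ℝ 1) (shiftₗ ℕ ℝ 1) :=
    ((Commute.refl _).add_right (Commute.one_right _)).neg_left
  have hsum : -fwdDiffₗ ℕ ℝ 1 + shiftₗ ℕ ℝ 1 = 1 := by rw [shiftₗ]; abel
  have h := congr_fun (LinearMap.congr_fun (hcomm.add_pow n) x) k
  rw [hsum, one_pow, Module.End.one_apply] at h
  rw [h, LinearMap.sum_apply, Finset.sum_apply]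
  refine sum_congr rfl fun j _ => ?_
  have hshift : (shiftₗ ℕ ℝ 1 ^ (n - j)) x = fun r => x (r + (n - j)) := by
    ext r; rw [shiftₗ_pow_apply, smul_eq_mul, mul_one]
  have hsign : ((-1) ^ j : Module.End ℤ (ℕ → ℝ)) = (((-1) ^ j : ℤ) : Module.End ℤ (ℕ → ℝ)) := by
    push_cast; rfl
  rw [Module.End.mul_apply, Module.End.mul_apply, Module.End.natCast_apply, map_nsmul, map_nsmul,
    hshift, neg_pow, Module.End.mul_apply, hsign, Module.End.intCast_apply, coe_fwdDiffₗ_pow,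
    Pi.smul_apply, Pi.smul_apply, fwdDiff_iter_comp_add, nsmul_eq_mul, zsmul_eq_mul]
  push_cast
  ring

theorem eq_sum_choose_sub_mul_neg_one_pow_mul_fwdDiff_iter {n k : ℕ} (hk : k ≤ n) :
    x k = ∑ j ∈ range (n + 1), (n - k).choose j * ((-1) ^ j * Δ_[1] ^[j] x (n - j)) := by
  rw [eq_sum_choose_mul_neg_one_pow_mul_fwdDiff_iter x (n - k) k]
  refine sum_subset_zero_on_sdiff (range_subset_range.mpr (by omega)) ?_ ?_
  · intro j hj
    rw [mem_sdiff, mem_range, mem_range] at hj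
    rw [Nat.choose_eq_zero_of_lt (by omega), Nat.cast_zero, zero_mul]
  · intro j hj
    rw [mem_range] at hj
    rw [show k + (n - k - j) = n - j by omega]

theorem mul_sq_le_of_fwdDiff_iter_nonneg {n : ℕ} (hn : 2 ≤ n) (h0 : x 0 = 1)
    (hx : ∀ j ≤ n, 0 ≤ (-1) ^ j * Δ_[1] ^[j] x (n - j)) :
    n * x 1 ^ 2 ≤ (n - 1) * x 2 + x 1 := by
  set w : ℕ → ℝ := fun j => n.choose j * ((-1) ^ j * Δ_[1] ^[j] x (n - j)) with hw
  have hrepr := fun k (hk : k ≤ n) => eq_sum_choose_sub_mul_neg_one_pow_mul_fwdDiff_iter x hk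
  have hmass : ∑ j ∈ range (n + 1), w j = 1 := by
    rw [← h0, hrepr 0 n.zero_le, Nat.sub_zero]
  have hmean : ∑ j ∈ range (n + 1), w j * (n - j) = n * x 1 := by
    rw [hrepr 1 (by omega), mul_sum]
    refine sum_congr rfl fun j _ => ?_
    simp only [hw]
    linear_combination ((-1) ^ j * Δ_[1] ^[j] x (n - j)) * Nat.cast_choose_mul_sub_eq n j
  have hfact : ∑ j ∈ range (n + 1), w j * ((n - j) * (n - j - 1)) = n * (n - 1) * x 2 := by
    rw [hrepr 2 hn, mul_sum]
    refine sum_congr rfl fun j _ => ?_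
    have h := Nat.cast_choose_mul_sub_eq (n - 1) j
    rw [Nat.cast_sub (by omega : 1 ≤ n), Nat.cast_one, show n - 1 - 1 = n - 2 by omega] at h
    simp only [hw]
    linear_combination ((-1) ^ j * Δ_[1] ^[j] x (n - j)) * n * h
      + ((-1) ^ j * Δ_[1] ^[j] x (n - j)) * ((n : ℝ) - j - 1) * Nat.cast_choose_mul_sub_eq n j
  have hvar : 0 ≤ ∑ j ∈ range (n + 1), w j * ((n - j) - n * x 1) ^ 2 :=
    sum_nonneg fun j hj => mul_nonneg
      (mul_nonneg (Nat.cast_nonneg _) (hx j (mem_range_succ_iff.mp hj))) (sq_nonneg _)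
  rw [sum_mul_sub_sq_eq, hfact, hmean, hmass] at hvar
  have hn0 : (0 : ℝ) < n := by exact_mod_cast (by omega : 0 < n)
  nlinarith

end

theorem neg_inv_le_div_of_mul_sq_le {n a b : ℝ} (hn : 0 < n) (ha : 0 < a) (hb : 0 ≤ b)
    (hba : b ≤ a) (ha1 : a ≤ 1) (h : n * a ^ 2 ≤ (n - 1) * b + a) :
    -(1 / n) ≤ (b - a ^ 2) / (a * (1 - b)) := by
  rcases (hba.trans ha1).eq_or_lt with rfl | hb1
  · rw [sub_self, mul_zero, div_zero, neg_nonpos]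
    positivity
  · rw [neg_div', div_le_div_iff₀ hn (by nlinarith)]
    nlinarith

noncomputable def extremalMoments (d : ℕ) : ℕ → ℝ
  | 0 => 1
  | 1 => 1 / d
  | _ + 2 => 0

theorem extremalMoments_alternating_sum_nonneg {d k j : ℕ} (h : k + j ≤ d) :
    0 ≤ ∑ i ∈ range (j + 1), (-1 : ℝ) ^ i * j.choose i * extremalMoments d (k + i) := by
  match k, j with
  | 0, 0 => simp [extremalMoments]
  | 0, j + 1 =>
    rw [sum_range_succ', sum_range_succ']
    have hj : ((j + 1 : ℕ) : ℝ) ≤ d := by exact_mod_cast (by omega : j + 1 ≤ d)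
    have hd : (0 : ℝ) < d := by exact_mod_cast (by omega : 0 < d)
    simp only [zero_add, extremalMoments, mul_zero, sum_const_zero, Nat.choose_one_right,
      Nat.choose_zero_right, pow_one, pow_zero, neg_one_mul, Nat.cast_one, mul_one, mul_one_div,
      neg_div]
    linarith [(div_le_one hd).mpr hj]
  | 1, j =>
    rw [sum_range_succ']
    simp only [show ∀ i, 1 + (i + 1) = i + 2 by omega, extremalMoments]
    simp
  | k + 2, j =>
    simp [extremalMoments, Nat.add_right_comm k 2]

/-- For any `d ≥ 2` and any `(d+1)`-monotone sequence `(1, β₁, …, β_d)` with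
`β₁ ≠ 0`, the correlation quantity `(β₂ - β₁²)/(β₁(1 - β₂))` is bounded below by
`-1/d`, and the bound is attained at `(1, 1/d, 0, …, 0)`. -/
theorem exchangeable_wide_geometric_correlation_lower_bound
    (d : ℕ) (hd : 2 ≤ d) :
    (∀ β : ℕ → ℝ, β 0 = 1 →
      (∀ k j : ℕ, k + j ≤ d →
        0 ≤ ∑ i ∈ Finset.range (j + 1),
          (-1 : ℝ) ^ i * (Nat.choose j i : ℝ) * β (k + i)) →
      β 1 ≠ 0 →
      -(1 / d : ℝ) ≤ (β 2 - β 1 ^ 2) / (β 1 * (1 - β 2))) ∧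
    (∃ β : ℕ → ℝ, β 0 = 1 ∧
      (∀ k j : ℕ, k + j ≤ d →
        0 ≤ ∑ i ∈ Finset.range (j + 1),
          (-1 : ℝ) ^ i * (Nat.choose j i : ℝ) * β (k + i)) ∧
      β 1 = 1 / d ∧ (∀ k : ℕ, 2 ≤ k → k ≤ d → β k = 0) ∧
      (β 2 - β 1 ^ 2) / (β 1 * (1 - β 2)) = -(1 / d : ℝ)) := by
  refine ⟨fun β h0 hβ h1 => ?_, extremalMoments d, rfl,
    fun k j h => extremalMoments_alternating_sum_nonneg h, rfl, ?_, ?_⟩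
  · have hd0 : (0 : ℝ) < d := by exact_mod_cast (by omega : 0 < d)
    have hdiag : ∀ j ≤ d, 0 ≤ (-1) ^ j * Δ_[1] ^[j] β (d - j) := fun j hj => by
      rw [← sum_neg_one_pow_mul_choose_mul_eq_fwdDiff_iter]
      exact hβ (d - j) j (by omega)
    have hβ1 : 0 ≤ β 1 := by simpa using hβ 1 0 (by omega)
    have hβ2 : 0 ≤ β 2 := by simpa using hβ 2 0 (by omega)
    have hβ10 : 0 ≤ β 0 - β 1 := by simpa [sum_range_succ, sub_eq_add_neg] using hβ 0 1 (by omega)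
    have hβ21 : 0 ≤ β 1 - β 2 := by simpa [sum_range_succ, sub_eq_add_neg] using hβ 1 1 (by omega)
    exact neg_inv_le_div_of_mul_sq_le hd0 (hβ1.lt_of_ne h1.symm) hβ2 (by linarith) (by linarith)
      (mul_sq_le_of_fwdDiff_iter_nonneg β hd h0 hdiag)
  · rintro (_ | _ | k) hk _
    · omega
    · omega
    · rfl
  · simp only [extremalMoments]
    field_simp
    ring
end

section
/- Every bivariate wide-sense geometric distribution with non-negatively correlated components is narrow-sense geometric: if P(τ₁>i, τ₂>j) = (p̃_∅ + p̃_{{2}})^{i−j} p̃_∅^j for i ≥ j and = (p̃_∅ + p̃_{{1}})^{j−i} p̃_∅^i for i < j, with Σ_{I⊆{1,2}} p̃_I = 1, p̃_∅ + p̃_{{1}} < 1, p̃_∅ + p̃_{{2}} < 1, p̃_∅ > 0, and p̃_∅ ≥ (p̃_∅ + p̃_{{1}})(p̃_∅ + p̃_{{2}}), then setting p₁ := p̃_∅/(p̃_∅+p̃_{{1}}), p₂ := p̃_∅/(p̃_∅+p̃_{{2}}), p₁₂ := (p̃_∅+p̃_{{1}})(p̃_∅+p̃_{{2}})/p̃_∅,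 one has p₁, p₂, p₁₂ ∈ (0,1], p₁p₁₂ < 1, p₂p₁₂ < 1, and P(τ₁>i, τ₂>j) = p₁^i p₂^j p₁₂^{max(i,j)} for all i, j ∈ ℕ₀. -/
/-! The narrow-sense parameters satisfy `p₁ p₁₂ = q0 + q2`, `p₂ p₁₂ = q0 + q1` and
`p₁ p₂ p₁₂ = q0`, and splitting `p₁^i p₂^j p₁₂^(max i j)` at `min i j` turns it into the
wide-sense survival function. The covariance condition is exactly `p₁₂ ≤ 1`. -/

theorem pow_mul_pow_mul_pow_max_of_le {M : Type*} [CommMonoid M] (x y z : M) {i j : ℕ}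
    (h : j ≤ i) : x ^ i * y ^ j * z ^ max i j = (x * z) ^ (i - j) * (x * y * z) ^ j := by
  obtain ⟨k, rfl⟩ := Nat.exists_eq_add_of_le h
  rw [max_eq_left h, Nat.add_sub_cancel_left]
  simp only [mul_pow, pow_add]
  ac_rfl

theorem pow_mul_pow_mul_pow_max_eq_ite {M : Type*} [CommMonoid M] (x y z : M) (i j : ℕ) :
    x ^ i * y ^ j * z ^ max i j =
      if j ≤ i then (x * z) ^ (i - j) * (x * y * z) ^ j
      else (y * z) ^ (j - i) * (x * y * z) ^ i := by
  split_ifs with h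
  · exact pow_mul_pow_mul_pow_max_of_le x y z h
  · rw [mul_comm (x ^ i), max_comm, mul_comm x y]
    exact pow_mul_pow_mul_pow_max_of_le y x z (Nat.le_of_not_le h)

theorem bivariate_wide_nonneg_corr_is_narrow_general
    (q0 q1 q2 : ℝ)
    (hq1 : 0 ≤ q1) (hq2 : 0 ≤ q2)
    (hfin1 : q0 + q1 < 1) (hfin2 : q0 + q2 < 1)
    (hq0pos : 0 < q0)
    (hcov : (q0 + q1) * (q0 + q2) ≤ q0)
    (F : ℕ → ℕ → ℝ)
    (hF : ∀ i j : ℕ, F i j =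
      if j ≤ i then (q0 + q2) ^ (i - j) * q0 ^ j else (q0 + q1) ^ (j - i) * q0 ^ i)
    (p₁ p₂ p₁₂ : ℝ)
    (hp₁ : p₁ = q0 / (q0 + q1)) (hp₂ : p₂ = q0 / (q0 + q2))
    (hp₁₂ : p₁₂ = (q0 + q1) * (q0 + q2) / q0) :
    (0 < p₁ ∧ p₁ ≤ 1) ∧ (0 < p₂ ∧ p₂ ≤ 1) ∧ (0 < p₁₂ ∧ p₁₂ ≤ 1) ∧
    p₁ * p₁₂ < 1 ∧ p₂ * p₁₂ < 1 ∧
    ∀ i j : ℕ, F i j = p₁ ^ i * p₂ ^ j * p₁₂ ^ max i j := by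
  have ha : 0 < q0 + q1 := by linarith
  have hb : 0 < q0 + q2 := by linarith
  have h₁ : p₁ * p₁₂ = q0 + q2 := by rw [hp₁, hp₁₂]; field_simp
  have h₂ : p₂ * p₁₂ = q0 + q1 := by rw [hp₂, hp₁₂]; field_simp
  have h₁₂ : p₁ * p₂ * p₁₂ = q0 := by rw [hp₁, hp₂, hp₁₂]; field_simp
  refine ⟨⟨?_, ?_⟩, ⟨?_, ?_⟩, ⟨?_, ?_⟩, h₁ ▸ hfin2, h₂ ▸ hfin1, fun i j => ?_⟩
  · rw [hp₁]; positivity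
  · rw [hp₁, div_le_one ha]; linarith
  · rw [hp₂]; positivity
  · rw [hp₂, div_le_one hb]; linarith
  · rw [hp₁₂]; positivity
  · rwa [hp₁₂, div_le_one hq0pos]
  · rw [hF, pow_mul_pow_mul_pow_max_eq_ite, h₁, h₂, h₁₂]

/-- Every bivariate wide-sense geometric distribution with non-negatively correlated
components is narrow-sense geometric. -/
theorem bivariate_wide_nonneg_corr_is_narrow
    (q0 q1 q2 q12 : ℝ)
    (hq0 : 0 ≤ q0) (hq1 : 0 ≤ q1) (hq2 : 0 ≤ q2) (hq12 : 0 ≤ q12)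
    (hsum : q0 + q1 + q2 + q12 = 1)
    (hfin1 : q0 + q1 < 1) (hfin2 : q0 + q2 < 1)
    (hq0pos : 0 < q0)
    (hcov : (q0 + q1) * (q0 + q2) ≤ q0)
    (F : ℕ → ℕ → ℝ)
    (hF : ∀ i j : ℕ, F i j =
      if j ≤ i then (q0 + q2) ^ (i - j) * q0 ^ j else (q0 + q1) ^ (j - i) * q0 ^ i)
    (p₁ p₂ p₁₂ : ℝ)
    (hp₁ : p₁ = q0 / (q0 + q1)) (hp₂ : p₂ = q0 / (q0 + q2))
    (hp₁₂ : p₁₂ = (q0 + q1) * (q0 + q2) / q0) :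
    (0 < p₁ ∧ p₁ ≤ 1) ∧ (0 < p₂ ∧ p₂ ≤ 1) ∧ (0 < p₁₂ ∧ p₁₂ ≤ 1) ∧
    p₁ * p₁₂ < 1 ∧ p₂ * p₁₂ < 1 ∧
    ∀ i j : ℕ, F i j = p₁ ^ i * p₂ ^ j * p₁₂ ^ max i j :=
  bivariate_wide_nonneg_corr_is_narrow_general q0 q1 q2 hq1 hq2 hfin1 hfin2 hq0pos hcov F hF p₁ p₂
    p₁₂ hp₁ hp₂ hp₁₂
end
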